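/- arXiv:2205.15215 — 5 statements merged into one kernel-verified Lean document; each statement's English description precedes it below -/
import Mathlib

section
/- Let M ∈ ℝ^{d×d} be symmetric, ρ > 0, and J ⊆ {1,…,d}. Suppose X̂ ∈ ℝ^{d×d}, Ẑ ∈ ℝ^{d×d}, and μ̂ ∈ ℝ satisfy: X̂ is zero outside J×J; X̂_{J,J} is symmetric positive semidefinite with tr(X̂_{J,J}) = 1; M_{J,J} − ρẐ_{J,J} ⪯ μ̂·I; M − ρẐ ⪯ μ̂·I; for each (i,j) ∈ J×J, Ẑ_{ij} ∈ ∂|X̂_{ij}| (i.e., Ẑ_{ij} = sign(X̂_{ij}) if X̂_{ij} ≠ 0 and Ẑ_{ij} ∈ [−1,1] if X̂_{ij} = 0); for each (i,j) ∉ J×J, Ẑ_{ij} ∈ (−1,1); (M_{J,J} − ρẐ_{J,J})·X̂_{J,J} = μ̂·X̂_{J,J}; and (M_{J^c,J} − ρẐ_{J^c,J})·X̂_{J,J} = 0. Then X̂ is an optimal solution of the semidefinite program maximize ⟨M, X⟩ − ρ‖X‖_{1,1} over symmetric positive semidefinite X ∈ ℝ^{d×d} with tr(X) = 1, and it satisfies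 supp(diag(X̂)) ⊆ J. -/
open MeasureTheory ProbabilityTheory Matrix Finset Real Filter Asymptotics

noncomputable section

/-- The `k`-th largest eigenvalue (1-indexed, counted with multiplicity) of a real
symmetric matrix; defined to be `0` if the matrix is not symmetric or `k` is out of range. -/
def eigvalDesc {m : Type*} [Fintype m] [DecidableEq m] (A : Matrix m m ℝ) (k : ℕ) : ℝ :=
  if h : A.IsHermitian then
    (Multiset.sort (Finset.univ.val.map h.eigenvalues) (· ≤ ·)).getD
      ((Multiset.sort (Finset.univ.val.map h.eigenvalues) (· ≤ ·)).length - k) 0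
  else 0

/-- The spectral norm (ℓ₂ operator norm) of a real matrix. -/
def specNorm {m n : Type*} [Fintype m] [Fintype n] [DecidableEq n] (A : Matrix m n ℝ) : ℝ :=
  ‖LinearMap.toContinuousLinearMap (Matrix.toEuclideanLin A)‖

/-- Frobenius norm. -/
def frobNorm {m n : Type*} [Fintype m] [Fintype n] (A : Matrix m n ℝ) : ℝ :=
  Real.sqrt (∑ i, ∑ j, (A i j) ^ 2)

/-- Entrywise max norm. -/
def maxNorm {m n : Type*} [Fintype m] [Fintype n] (A : Matrix m n ℝ) : ℝ :=
  ⨆ i, ⨆ j, |A i j|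

/-- `(2,∞)` norm: maximum of the ℓ₂ norms of the columns. -/
def norm2Inf {m n : Type*} [Fintype m] [Fintype n] (A : Matrix m n ℝ) : ℝ :=
  ⨆ j, Real.sqrt (∑ i, (A i j) ^ 2)

/-- `(∞,2)` norm: ℓ₂ norm of the vector of columnwise max absolute values. -/
def normInf2 {m n : Type*} [Fintype m] [Fintype n] (A : Matrix m n ℝ) : ℝ :=
  Real.sqrt (∑ j, (⨆ i, |A i j|) ^ 2)

/-- Submatrix of `A` with rows in `R` and columns in `C`. -/
def subm {d : ℕ} (A : Matrix (Fin d) (Fin d) ℝ) (R C : Finset (Fin d)) :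
    Matrix R C ℝ := fun i j => A i.1 j.1

/-- Objective of the ℓ₁-penalized sparse-PCA SDP: `⟨M, X⟩ − ρ‖X‖₁,₁`. -/
def sdpObj {n : Type*} [Fintype n] (ρ : ℝ) (M X : Matrix n n ℝ) : ℝ :=
  (∑ i, ∑ j, M i j * X i j) - ρ * ∑ i, ∑ j, |X i j|

/-- Feasibility for the SDP: symmetric positive semidefinite with unit trace. -/
def IsSdpFeasible {n : Type*} [Fintype n] (X : Matrix n n ℝ) : Prop :=
  X.PosSemidef ∧ X.trace = 1

/-- `X` is an optimal solution of `max ⟨M, Y⟩ − ρ‖Y‖₁,₁` s.t. `Y ⪰ 0`, `tr Y = 1`. -/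
def IsSdpOptimal {n : Type*} [Fintype n] (ρ : ℝ) (M X : Matrix n n ℝ) : Prop :=
  IsSdpFeasible X ∧ ∀ Y : Matrix n n ℝ, IsSdpFeasible Y → sdpObj ρ M Y ≤ sdpObj ρ M X

/-- `X` is the unique optimal solution of the SDP. -/
def IsUniqueSdpOptimal {n : Type*} [Fintype n] (ρ : ℝ) (M X : Matrix n n ℝ) : Prop :=
  IsSdpOptimal ρ M X ∧ ∀ Y : Matrix n n ℝ, IsSdpOptimal ρ M Y → Y = X

end

section Helpers

open Matrix

private lemma psd_diag_nonneg'' {n : Type*} [Fintype n] [DecidableEq n]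
    {A : Matrix n n ℝ} (hA : A.PosSemidef) (i : n) : 0 ≤ A i i := by
  have := hA.dotProduct_mulVec_nonneg (Pi.single i 1)
  simpa [Matrix.mulVec, dotProduct, Pi.single_apply] using this

private lemma trace_mul_psd_nonneg'' {n : Type*} [Fintype n] [DecidableEq n]
    {A B : Matrix n n ℝ} (hA : A.PosSemidef) (hB : B.PosSemidef) :
    0 ≤ (A * B).trace := by
  obtain ⟨C, rfl⟩ : ∃ C : Matrix n n ℝ, A = Cᴴ * C := by
    open scoped MatrixOrder in
    have h0 : (0 : Matrix n n ℝ) ≤ A := Matrix.nonneg_iff_posSemidef.mpr hA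
    exact ⟨CFC.sqrt A, by
      rw [← Matrix.star_eq_conjTranspose, (CFC.sqrt_nonneg A).isSelfAdjoint.star_eq,
        CFC.sqrt_mul_sqrt_self A h0]⟩
  rw [← Matrix.trace_mul_cycle C B Cᴴ]
  have hpsd : (C * B * Cᴴ).PosSemidef := hB.mul_mul_conjTranspose_same C
  exact Finset.sum_nonneg fun i _ => psd_diag_nonneg'' hpsd i

private lemma herm_apply'' {n : Type*} [Fintype n] {A : Matrix n n ℝ}
    (hA : A.IsHermitian) (i j : n) : A j i = A i j := by
  have h := congrFun (congrFun hA j) i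
  simpa [Matrix.conjTranspose_apply] using h.symm

private lemma sum_restrict_JJ {d : ℕ} (J : Finset (Fin d)) (f : Fin d → Fin d → ℝ)
    (hf : ∀ i j, ¬(i ∈ J ∧ j ∈ J) → f i j = 0) :
    ∑ i, ∑ j, f i j = ∑ i : J, ∑ j : J, f i.1 j.1 := by
  calc ∑ i, ∑ j, f i j
      = ∑ i ∈ J, ∑ j, f i j := by
        refine (Finset.sum_subset (Finset.subset_univ J) fun i _ hi => ?_).symm
        exact Finset.sum_eq_zero fun j _ => hf i j fun h => hi h.1
    _ = ∑ i ∈ J, ∑ j ∈ J, f i j := by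
        refine Finset.sum_congr rfl fun i _ => ?_
        exact (Finset.sum_subset (Finset.subset_univ J) fun j _ hj =>
          hf i j fun h => hj h.2).symm
    _ = ∑ i : J, ∑ j : J, f i.1 j.1 := by
        rw [← Finset.sum_coe_sort J (fun i => ∑ j ∈ J, f i j)]
        exact Finset.sum_congr rfl fun i _ => (Finset.sum_coe_sort J (fun j => f i.1 j)).symm

private lemma real_sign_mul_self'' {x : ℝ} (hx : x ≠ 0) : Real.sign x * x = |x| := by
  rcases lt_or_gt_of_ne hx with h | h
  · rw [Real.sign_of_neg h, abs_of_neg h]; ring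
  · rw [Real.sign_of_pos h, abs_of_pos h]; ring

end Helpers

/-- Proposition 1: KKT-type sufficient conditions for optimality of the
SDP with no false positives in the support. -/
theorem sdp_kkt_sufficient_support_subset {d : ℕ}
    (M : Matrix (Fin d) (Fin d) ℝ) (hM : M.IsSymm) (ρ : ℝ) (hρ : 0 < ρ)
    (J : Finset (Fin d)) (Xh Zh : Matrix (Fin d) (Fin d) ℝ) (μh : ℝ)
    (hX0 : ∀ i j, ¬(i ∈ J ∧ j ∈ J) → Xh i j = 0)
    (hXpsd : (subm Xh J J).PosSemidef)
    (hXtr : (subm Xh J J).trace = 1)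
    (hJJ : (μh • (1 : Matrix J J ℝ) - (subm M J J - ρ • subm Zh J J)).PosSemidef)
    (hfull : (μh • (1 : Matrix (Fin d) (Fin d) ℝ) - (M - ρ • Zh)).PosSemidef)
    (hZin : ∀ i ∈ J, ∀ j ∈ J,
      (Xh i j ≠ 0 → Zh i j = Real.sign (Xh i j)) ∧
      (Xh i j = 0 → Zh i j ∈ Set.Icc (-1 : ℝ) 1))
    (hZout : ∀ i j, ¬(i ∈ J ∧ j ∈ J) → Zh i j ∈ Set.Ioo (-1 : ℝ) 1)
    (heq1 : (subm M J J - ρ • subm Zh J J) * subm Xh J J = μh • subm Xh J J)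
    (heq2 : (subm M Jᶜ J - ρ • subm Zh Jᶜ J) * subm Xh J J = 0) :
    IsSdpOptimal ρ M Xh ∧ ∀ i, Xh i i ≠ 0 → i ∈ J := by
  classical
  have hXs : ∀ i j, Xh j i = Xh i j := by
    intro i j
    by_cases h : i ∈ J ∧ j ∈ J
    · have := herm_apply'' hXpsd.1 (⟨i, h.1⟩ : J) (⟨j, h.2⟩ : J)
      simpa [subm] using this
    · rw [hX0 i j h, hX0 j i fun hc => h ⟨hc.2, hc.1⟩]
  have hZle : ∀ i j, |Zh i j| ≤ 1 := by
    intro i j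
    by_cases h : i ∈ J ∧ j ∈ J
    · obtain ⟨h1, h2⟩ := hZin i h.1 j h.2
      by_cases hx : Xh i j = 0
      · obtain ⟨ha, hb⟩ := h2 hx
        exact abs_le.mpr ⟨ha, hb⟩
      · rw [h1 hx]
        rcases Real.sign_apply_eq (Xh i j) with hs | hs | hs <;> rw [hs] <;> norm_num
    · obtain ⟨ha, hb⟩ := hZout i j h
      exact abs_le.mpr ⟨ha.le, hb.le⟩
  -- Xh is feasible
  have hXhherm : Xh.IsHermitian := by
    ext i j
    simpa [Matrix.conjTranspose_apply] using hXs i j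
  have hXhpsd : Xh.PosSemidef := by
    refine Matrix.PosSemidef.of_dotProduct_mulVec_nonneg hXhherm fun x => ?_
    have hre := sum_restrict_JJ J (fun i j => x i * (Xh i j * x j))
      (by intro i j h; simp [hX0 i j h])
    have h2 : (0:ℝ) ≤ ∑ i : J, ∑ j : J, x i.1 * (Xh i.1 j.1 * x j.1) := by
      have := hXpsd.dotProduct_mulVec_nonneg (fun i : J => x i.1)
      simpa [dotProduct, Matrix.mulVec, subm, Finset.mul_sum] using this
    have hlhs : dotProduct (star x) (Xh *ᵥ x)
        = ∑ i, ∑ j, x i * (Xh i j * x j) := by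
      simp [dotProduct, Matrix.mulVec, Finset.mul_sum]
    rw [hlhs, hre]
    exact h2
  have hXhtr : Xh.trace = 1 := by
    have h1 : Xh.trace = ∑ i ∈ J, Xh i i := by
      refine (Finset.sum_subset (Finset.subset_univ J) fun i _ hi => ?_).symm
      exact hX0 i i fun h => hi h.1
    have h2 : ∑ i ∈ J, Xh i i = ∑ i : J, Xh i.1 i.1 := (Finset.sum_coe_sort J _).symm
    have h3 : ∑ i : J, Xh i.1 i.1 = 1 := by
      simpa [Matrix.trace, Matrix.diag, subm] using hXtr
    rw [h1, h2, h3]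
  -- objective value of Xh equals μh
  have hZXabs : ∀ i j, |Xh i j| = Zh i j * Xh i j := by
    intro i j
    by_cases hx : Xh i j = 0
    · simp [hx]
    · have hij : i ∈ J ∧ j ∈ J := by by_contra h; exact hx (hX0 i j h)
      rw [(hZin i hij.1 j hij.2).1 hx, real_sign_mul_self'' hx]
  have hobjXh : sdpObj ρ M Xh = μh := by
    have e1 : sdpObj ρ M Xh = ∑ i, ∑ j, (M i j - ρ * Zh i j) * Xh i j := by
      calc sdpObj ρ M Xh = ∑ i, ∑ j, (M i j * Xh i j - ρ * |Xh i j|) := by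
            simp [sdpObj, Finset.sum_sub_distrib, Finset.mul_sum]
        _ = ∑ i, ∑ j, (M i j - ρ * Zh i j) * Xh i j := by
            refine Finset.sum_congr rfl fun i _ => Finset.sum_congr rfl fun j _ => ?_
            rw [hZXabs i j]; ring
    rw [e1, sum_restrict_JJ J _ (fun i j h => by simp [hX0 i j h])]
    have htr := congrArg Matrix.trace heq1
    rw [Matrix.trace_smul, hXtr, smul_eq_mul, mul_one] at htr
    rw [← htr]
    simp only [Matrix.trace, Matrix.diag, Matrix.mul_apply, Matrix.sub_apply,
      Matrix.smul_apply, subm, smul_eq_mul]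
    refine Finset.sum_congr rfl fun i _ => Finset.sum_congr rfl fun j _ => ?_
    rw [hXs i.1 j.1]
  refine ⟨⟨⟨hXhpsd, hXhtr⟩, ?_⟩, fun i hi => by
    by_contra h; exact hi (hX0 i i fun hc => h hc.1)⟩
  intro Y hY
  obtain ⟨hYpsd, hYtr⟩ := hY
  have hYs : ∀ i j, Y j i = Y i j := herm_apply'' hYpsd.1
  have h0 : 0 ≤ ((μh • (1 : Matrix (Fin d) (Fin d) ℝ) - (M - ρ • Zh)) * Y).trace :=
    trace_mul_psd_nonneg'' hfull hYpsd
  have hexp : ((μh • (1 : Matrix (Fin d) (Fin d) ℝ) - (M - ρ • Zh)) * Y).trace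
      = μh * Y.trace - ((M - ρ • Zh) * Y).trace := by
    rw [Matrix.sub_mul, Matrix.trace_sub, Matrix.smul_mul, Matrix.one_mul,
      Matrix.trace_smul, smul_eq_mul]
  have hkey : ((M - ρ • Zh) * Y).trace ≤ μh := by
    rw [hexp, hYtr, mul_one] at h0; linarith
  have hkey2 : ∑ i, ∑ j, (M i j - ρ * Zh i j) * Y i j ≤ μh := by
    calc ∑ i, ∑ j, (M i j - ρ * Zh i j) * Y i j
        = ((M - ρ • Zh) * Y).trace := by
          simp only [Matrix.trace, Matrix.diag, Matrix.mul_apply, Matrix.sub_apply,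
            Matrix.smul_apply, smul_eq_mul]
          exact Finset.sum_congr rfl fun i _ => Finset.sum_congr rfl fun j _ => by
            rw [hYs i j]
      _ ≤ μh := hkey
  have hYle : sdpObj ρ M Y ≤ μh := by
    calc sdpObj ρ M Y = ∑ i, ∑ j, (M i j * Y i j - ρ * |Y i j|) := by
          simp [sdpObj, Finset.sum_sub_distrib, Finset.mul_sum]
      _ ≤ ∑ i, ∑ j, (M i j - ρ * Zh i j) * Y i j := by
          refine Finset.sum_le_sum fun i _ => Finset.sum_le_sum fun j _ => ?_
          have h1 : Zh i j * Y i j ≤ |Y i j| := by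
            calc Zh i j * Y i j ≤ |Zh i j * Y i j| := le_abs_self _
              _ = |Zh i j| * |Y i j| := abs_mul _ _
              _ ≤ 1 * |Y i j| := mul_le_mul_of_nonneg_right (hZle i j) (abs_nonneg _)
              _ = |Y i j| := one_mul _
          have h2 : ρ * (Zh i j * Y i j) ≤ ρ * |Y i j| :=
            mul_le_mul_of_nonneg_left h1 hρ.le
          nlinarith [h2]
      _ ≤ μh := hkey2
  rw [hobjXh]
  exact hYle
end

section
/- Let M ∈ ℝ^{d×d} be symmetric, ρ > 0, and let u₁ ∈ ℝ^d be a vector with support J = {i : u_{1,i} ≠ 0} of size s, 0 < s < d. Define ẑ ∈ ℝ^s by ẑ_i = sign(u_{1,i}) for i ∈ J, let x̂ ∈ ℝ^s be a unit leading eigenvector of M_{J,J} − ρẑẑᵀ, and let ŵ = (1/(ρ‖x̂‖₁))·M_{J^c,J}·x̂ ∈ ℝ^{d−s}. Suppose: (1) sign(x̂_i) = sign(u_{1,i}) for all i ∈ J; (2) ‖ŵ‖_∞ < 1; (3) λ₁(M_{J,J} − ρẑẑᵀ) = λ₁(M − ρ·vvᵀ), where v ∈ ℝ^d is the vector whose entries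 on J are ẑ and on J^c are ŵ (placed in the corresponding index positions); and (4) λ₁(M_{J,J} − ρẑẑᵀ) > λ₂(M_{J,J} − ρẑẑᵀ). Then the matrix X̂ ∈ ℝ^{d×d} that equals x̂x̂ᵀ on J×J and zero elsewhere is the unique optimal solution of the semidefinite program maximize ⟨M, X⟩ − ρ‖X‖_{1,1} over symmetric positive semidefinite X with tr(X) = 1, and supp(diag(X̂)) = J. -/
open MeasureTheory ProbabilityTheory Matrix Finset Real Filter Asymptotics

section AuxSpectral

set_option linter.unusedSectionVars false

lemma sorted_le_getD_last {l : List ℝ} (hs : l.Pairwise (· ≤ ·)) {x : ℝ} (hx : x ∈ l) :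
    x ≤ l.getD (l.length - 1) 0 := by
  obtain ⟨i, hi⟩ := List.mem_iff_get.mp hx
  have hlen : 0 < l.length := lt_of_le_of_lt (Nat.zero_le _) i.2
  have hlast : l.length - 1 < l.length := Nat.sub_lt hlen one_pos
  rw [List.getD_eq_getElem l 0 hlast]
  rcases eq_or_lt_of_le (Nat.le_sub_one_of_lt i.2) with h | h
  · have : i = ⟨l.length - 1, hlast⟩ := Fin.ext h
    rw [this] at hi
    simp [← hi]
  · subst hi
    simpa using hs.rel_get_of_lt (a := i) (b := ⟨l.length - 1, hlast⟩) h

lemma sorted_second_ge {l : List ℝ} (hs : l.Pairwise (· ≤ ·)) {t : ℝ}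
    (hc : 2 ≤ l.count t) : t ≤ l.getD (l.length - 2) 0 := by
  have hdup : List.Sublist [t, t] l :=
    List.duplicate_iff_sublist.mp (List.duplicate_iff_two_le_count.mpr hc)
  have hne : l ≠ [] := by rintro rfl; simp at hc
  have hdecomp : l.dropLast ++ [l.getLast hne] = l := List.dropLast_append_getLast hne
  have hmem : t ∈ l.dropLast := by
    rw [← hdecomp] at hdup
    obtain ⟨l₁, l₂, heq, h₁, h₂⟩ := List.sublist_append_iff.mp hdup
    have hl₂ : l₂.length ≤ 1 := h₂.length_le.trans (by simp)
    have hl₁ : 1 ≤ l₁.length := by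
      have := congrArg List.length heq; simp at this; omega
    have ht1 : t ∈ l₁ := by
      cases l₁ with
      | nil => simp at hl₁
      | cons a l' =>
        have : a = t := by
          have := congrArg (fun L => L.head?) heq; simpa using this.symm
        simp [this]
    exact h₁.mem ht1
  have hs' : l.dropLast.Pairwise (· ≤ ·) := hs.sublist (List.dropLast_sublist l)
  have h1 := sorted_le_getD_last hs' hmem
  have hlen' : 0 < l.dropLast.length :=
    List.length_pos_iff.mpr (by rintro h; rw [h] at hmem; simp at hmem)
  have hidx : l.dropLast.length - 1 < l.dropLast.length := Nat.sub_lt hlen' one_pos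
  rw [List.getD_eq_getElem _ 0 hidx, List.getElem_dropLast] at h1
  rw [List.getD_eq_getElem _ 0 (by
    have := List.length_dropLast (xs := l); omega : l.length - 2 < l.length)]
  convert h1 using 2
  have := List.length_dropLast (xs := l)
  omega

variable {n : Type*} [Fintype n] [DecidableEq n]

lemma eigvalDesc_ub {A : Matrix n n ℝ} (hA : A.IsHermitian) (k : n) :
    hA.eigenvalues k ≤ eigvalDesc A 1 := by
  rw [eigvalDesc, dif_pos hA]
  exact sorted_le_getD_last (Multiset.pairwise_sort _ _)
    ((Multiset.mem_sort _).mpr (Multiset.mem_map_of_mem _ (Finset.mem_univ_val _)))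

lemma eigvalDesc_top_unique {A : Matrix n n ℝ} (hA : A.IsHermitian)
    (hgap : eigvalDesc A 2 < eigvalDesc A 1)
    {k l : n} (hk : hA.eigenvalues k = eigvalDesc A 1)
    (hl : hA.eigenvalues l = eigvalDesc A 1) : k = l := by
  by_contra hne
  set t := eigvalDesc A 1 with ht
  have hcount : 2 ≤ (Multiset.sort (Finset.univ.val.map hA.eigenvalues) (· ≤ ·)).count t := by
    have h1 : (Multiset.sort (Finset.univ.val.map hA.eigenvalues) (· ≤ ·)).count t
        = Multiset.count t (Finset.univ.val.map hA.eigenvalues) := by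
      rw [← Multiset.coe_count, Multiset.sort_eq]
    rw [h1, Multiset.count_map]
    have hsub : ({k, l} : Finset n) ⊆ Finset.univ.filter (fun a => t = hA.eigenvalues a) := by
      intro x hx
      rcases Finset.mem_insert.mp hx with rfl | hx
      · exact Finset.mem_filter.mpr ⟨Finset.mem_univ _, hk.symm⟩
      · rcases Finset.mem_singleton.mp hx with rfl
        exact Finset.mem_filter.mpr ⟨Finset.mem_univ _, hl.symm⟩
    calc (2 : ℕ) = ({k, l} : Finset n).card := (Finset.card_pair hne).symm
      _ ≤ (Finset.univ.filter (fun a => t = hA.eigenvalues a)).card := Finset.card_le_card hsub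
      _ = Multiset.card (Multiset.filter (fun a => t = hA.eigenvalues a) Finset.univ.val) :=
          rfl
  have h2 := sorted_second_ge (Multiset.pairwise_sort _ _) hcount
  rw [eigvalDesc, dif_pos hA] at hgap
  nth_rewrite 1 [ht] at h2
  rw [eigvalDesc, dif_pos hA] at h2
  rw [ht, eigvalDesc, dif_pos hA] at hgap
  exact absurd (lt_of_le_of_lt h2 hgap) (lt_irrefl _)

lemma swap4 (f : n → n → n → n → ℝ) :
    ∑ k, ∑ l, ∑ a, ∑ b, f k l a b = ∑ a, ∑ b, ∑ k, ∑ l, f k l a b :=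
  calc ∑ k, ∑ l, ∑ a, ∑ b, f k l a b
      = ∑ k, ∑ a, ∑ l, ∑ b, f k l a b :=
        Finset.sum_congr rfl fun _ _ => Finset.sum_comm
    _ = ∑ a, ∑ k, ∑ l, ∑ b, f k l a b := Finset.sum_comm
    _ = ∑ a, ∑ k, ∑ b, ∑ l, f k l a b :=
        Finset.sum_congr rfl fun _ _ => Finset.sum_congr rfl fun _ _ => Finset.sum_comm
    _ = ∑ a, ∑ b, ∑ k, ∑ l, f k l a b :=
        Finset.sum_congr rfl fun _ _ => Finset.sum_comm

lemma key_sum (u : n → n → ℝ)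
    (horth : ∀ a b, ∑ k, u k a * u k b = if a = b then (1:ℝ) else 0)
    (B C : Matrix n n ℝ) :
    ∑ k, (B *ᵥ u k) ⬝ᵥ (C *ᵥ u k) = ∑ i, ∑ j, B i j * C i j := by
  have step : ∀ k, (B *ᵥ u k) ⬝ᵥ (C *ᵥ u k)
      = ∑ i, ∑ a, ∑ b, (B i a * C i b) * (u k a * u k b) := by
    intro k
    simp only [dotProduct, mulVec, Finset.sum_mul_sum]
    exact Finset.sum_congr rfl fun i _ => Finset.sum_congr rfl fun a _ =>
      Finset.sum_congr rfl fun b _ => by ring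
  calc ∑ k, (B *ᵥ u k) ⬝ᵥ (C *ᵥ u k)
      = ∑ k, ∑ i, ∑ a, ∑ b, (B i a * C i b) * (u k a * u k b) :=
        Finset.sum_congr rfl fun k _ => step k
    _ = ∑ i, ∑ a, ∑ b, (B i a * C i b) * ∑ k, (u k a * u k b) := by
        rw [Finset.sum_comm]
        refine Finset.sum_congr rfl fun i _ => ?_
        rw [Finset.sum_comm]
        refine Finset.sum_congr rfl fun a _ => ?_
        rw [Finset.sum_comm]
        refine Finset.sum_congr rfl fun b _ => ?_
        rw [Finset.mul_sum]
    _ = ∑ i, ∑ j, B i j * C i j := by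
        simp only [horth, mul_ite, mul_one, mul_zero]
        simp [Finset.sum_ite_eq]

lemma expand_entry (u : n → n → ℝ)
    (horth : ∀ a b, ∑ k, u k a * u k b = if a = b then (1:ℝ) else 0)
    (Y : Matrix n n ℝ) (i j : n) :
    Y i j = ∑ k, ∑ l, ((u k) ⬝ᵥ (Y *ᵥ u l)) * (u k i * u l j) := by
  refine Eq.symm ?_
  have step : ∀ k l, ((u k) ⬝ᵥ (Y *ᵥ u l)) * (u k i * u l j)
      = ∑ a, ∑ b, (Y a b) * ((u k a * u k i) * (u l b * u l j)) := by
    intro k l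
    simp only [dotProduct, mulVec, Finset.mul_sum, Finset.sum_mul]
    exact Finset.sum_congr rfl fun a _ => Finset.sum_congr rfl fun b _ => by ring
  calc (∑ k, ∑ l, ((u k) ⬝ᵥ (Y *ᵥ u l)) * (u k i * u l j))
      = ∑ k, ∑ l, ∑ a, ∑ b, (Y a b) * ((u k a * u k i) * (u l b * u l j)) :=
        Finset.sum_congr rfl fun k _ => Finset.sum_congr rfl fun l _ => step k l
    _ = ∑ a, ∑ b, ∑ k, ∑ l, (Y a b) * ((u k a * u k i) * (u l b * u l j)) :=
        swap4 _
    _ = ∑ a, ∑ b, (Y a b) * ((∑ k, u k a * u k i) * (∑ l, u l b * u l j)) := by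
        refine Finset.sum_congr rfl fun a _ => Finset.sum_congr rfl fun b _ => ?_
        rw [Finset.sum_mul_sum, Finset.mul_sum]
        refine Finset.sum_congr rfl fun k _ => ?_
        rw [Finset.mul_sum]
    _ = Y i j := by
        simp only [horth]
        simp [Finset.sum_ite_eq]

lemma expand_vec (u : n → n → ℝ)
    (horth : ∀ a b, ∑ k, u k a * u k b = if a = b then (1:ℝ) else 0)
    (x : n → ℝ) (i : n) : x i = ∑ k, ((u k) ⬝ᵥ x) * u k i := by
  refine Eq.symm ?_
  calc (∑ k, ((u k) ⬝ᵥ x) * u k i)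
      = ∑ k, ∑ a, x a * (u k a * u k i) := by
        refine Finset.sum_congr rfl fun k _ => ?_
        simp only [dotProduct, Finset.sum_mul]
        exact Finset.sum_congr rfl fun a _ => by ring
    _ = ∑ a, x a * ∑ k, (u k a * u k i) := by
        rw [Finset.sum_comm]
        exact Finset.sum_congr rfl fun a _ => by rw [Finset.mul_sum]
    _ = x i := by simp only [horth]; simp [Finset.sum_ite_eq]

lemma row_orth {A : Matrix n n ℝ} (hA : A.IsHermitian) (a b : n) :
    ∑ k, hA.eigenvectorBasis k a * hA.eigenvectorBasis k b = if a = b then (1:ℝ) else 0 := by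
  have h := (Matrix.mem_unitaryGroup_iff).mp (hA.eigenvectorUnitary).2
  have := congrFun (congrFun h a) b
  simpa [Matrix.mul_apply, Matrix.one_apply, Matrix.star_apply,
    Matrix.IsHermitian.eigenvectorUnitary_apply] using this

lemma col_orth {A : Matrix n n ℝ} (hA : A.IsHermitian) (k l : n) :
    ∑ a, hA.eigenvectorBasis k a * hA.eigenvectorBasis l a = if k = l then (1:ℝ) else 0 := by
  have h := (Matrix.mem_unitaryGroup_iff').mp (hA.eigenvectorUnitary).2
  have := congrFun (congrFun h k) l
  simpa [Matrix.mul_apply, Matrix.one_apply, Matrix.star_apply,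
    Matrix.IsHermitian.eigenvectorUnitary_apply, mul_comm] using this

lemma herm_apply_symm {A : Matrix n n ℝ} (hA : A.IsHermitian) (i j : n) : A j i = A i j := by
  have := congrFun (congrFun hA j) i
  simpa [Matrix.conjTranspose_apply] using this.symm

lemma dot_mulVec_symm {A : Matrix n n ℝ} (hA : A.IsHermitian) (x y : n → ℝ) :
    (A *ᵥ x) ⬝ᵥ y = x ⬝ᵥ (A *ᵥ y) := by
  simp only [dotProduct, mulVec, Finset.sum_mul, Finset.mul_sum]
  rw [Finset.sum_comm]
  exact Finset.sum_congr rfl fun i _ => Finset.sum_congr rfl fun j _ => by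
    rw [herm_apply_symm hA i j]; ring

lemma psd_quad_nonneg {Y : Matrix n n ℝ} (hY : Y.PosSemidef) (x : n → ℝ) :
    0 ≤ x ⬝ᵥ (Y *ᵥ x) := by
  have := hY.dotProduct_mulVec_nonneg x
  simpa using this

lemma psd_inner_le {A : Matrix n n ℝ} (hA : A.IsHermitian) {Y : Matrix n n ℝ}
    (hY : Y.PosSemidef) {lam : ℝ} (hub : ∀ k, hA.eigenvalues k ≤ lam) :
    ∑ i, ∑ j, A i j * Y i j ≤ lam * Y.trace := by
  set u : n → n → ℝ := fun k a => hA.eigenvectorBasis k a with hu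
  have horth := row_orth hA
  have he : ∀ k, A *ᵥ u k = hA.eigenvalues k • u k := fun k => hA.mulVec_eigenvectorBasis k
  have h1 : ∑ i, ∑ j, A i j * Y i j = ∑ k, hA.eigenvalues k * ((u k) ⬝ᵥ (Y *ᵥ u k)) := by
    rw [← key_sum u horth A Y]
    refine Finset.sum_congr rfl fun k _ => ?_
    rw [he k, smul_dotProduct, smul_eq_mul]
  have h2 : Y.trace = ∑ k, (u k) ⬝ᵥ (Y *ᵥ u k) := by
    have := key_sum u horth 1 Y
    simp only [Matrix.one_mulVec] at this
    rw [this]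
    simp [Matrix.trace, Matrix.diag, Matrix.one_apply, ite_mul, Finset.sum_ite_eq]
  rw [h1, h2, Finset.mul_sum]
  exact Finset.sum_le_sum fun k _ =>
    mul_le_mul_of_nonneg_right (hub k) (psd_quad_nonneg hY (u k))

lemma psd_inner_eq {A : Matrix n n ℝ} (hA : A.IsHermitian) {Y : Matrix n n ℝ}
    (hY : Y.PosSemidef) {lam : ℝ} (hub : ∀ k, hA.eigenvalues k ≤ lam)
    (hmult : ∀ k l : n, hA.eigenvalues k = lam → hA.eigenvalues l = lam → k = l)
    (htr : Y.trace = 1) (heq : ∑ i, ∑ j, A i j * Y i j = lam)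
    {x : n → ℝ} (hx : ∑ i, (x i) ^ 2 = 1) (hxe : A *ᵥ x = lam • x) :
    Y = Matrix.vecMulVec x x := by
  set u : n → n → ℝ := fun k a => hA.eigenvectorBasis k a with hu
  have horth := row_orth hA
  have he : ∀ k, A *ᵥ u k = hA.eigenvalues k • u k := fun k => hA.mulVec_eigenvectorBasis k
  set q : n → ℝ := fun k => (u k) ⬝ᵥ (Y *ᵥ u k) with hqdef
  have hqnn : ∀ k, 0 ≤ q k := fun k => psd_quad_nonneg hY (u k)
  have h1 : ∑ k, hA.eigenvalues k * q k = lam := by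
    rw [← heq, ← key_sum u horth A Y]
    refine Finset.sum_congr rfl fun k _ => ?_
    rw [he k, smul_dotProduct, smul_eq_mul]
  have h2 : ∑ k, q k = 1 := by
    have h := key_sum u horth 1 Y
    simp only [Matrix.one_mulVec] at h
    calc ∑ k, q k = ∑ i, ∑ j, (1 : Matrix n n ℝ) i j * Y i j := h
      _ = Y.trace := by
          simp [Matrix.trace, Matrix.diag, Matrix.one_apply, ite_mul, Finset.sum_ite_eq]
      _ = 1 := htr
  have hzero : ∀ k, hA.eigenvalues k ≠ lam → q k = 0 := by
    intro k hk
    have hsum0 : ∑ k, (lam - hA.eigenvalues k) * q k = 0 := by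
      have : ∑ k, (lam - hA.eigenvalues k) * q k
          = lam * ∑ k, q k - ∑ k, hA.eigenvalues k * q k := by
        rw [Finset.mul_sum, ← Finset.sum_sub_distrib]
        exact Finset.sum_congr rfl fun k _ => by ring
      rw [this, h1, h2]; ring
    have hterm := (Finset.sum_eq_zero_iff_of_nonneg
      (fun k _ => mul_nonneg (sub_nonneg.mpr (hub k)) (hqnn k))).mp hsum0 k (Finset.mem_univ k)
    rcases mul_eq_zero.mp hterm with h | h
    · exact absurd (by linarith [sub_eq_zero.mp h] : hA.eigenvalues k = lam) hk
    · exact h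
  have hker : ∀ k, hA.eigenvalues k ≠ lam → Y *ᵥ u k = 0 := by
    intro k hk
    have := hzero k hk
    exact (hY.dotProduct_mulVec_zero_iff (u k)).mp (by simpa [hqdef] using this)
  obtain ⟨k₀, hk₀⟩ : ∃ k, q k ≠ 0 := by
    by_contra h
    push_neg at h
    rw [Finset.sum_eq_zero (fun k _ => h k)] at h2
    norm_num at h2
  have hlamk₀ : hA.eigenvalues k₀ = lam := by
    by_contra h
    exact hk₀ (hzero k₀ h)
  have hne : ∀ k, k ≠ k₀ → hA.eigenvalues k ≠ lam :=
    fun k hkne hlam => hkne (hmult k k₀ hlam hlamk₀)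
  have hq₀ : q k₀ = 1 := by
    rw [← h2, Finset.sum_eq_single k₀ (fun k _ hkne => hzero k (hne k hkne)) (by simp)]
  have hxorth : ∀ k, k ≠ k₀ → (u k) ⬝ᵥ x = 0 := by
    intro k hkne
    have e1 : hA.eigenvalues k * ((u k) ⬝ᵥ x) = lam * ((u k) ⬝ᵥ x) := by
      calc hA.eigenvalues k * ((u k) ⬝ᵥ x)
          = (hA.eigenvalues k • u k) ⬝ᵥ x := by rw [smul_dotProduct, smul_eq_mul]
        _ = (A *ᵥ u k) ⬝ᵥ x := by rw [he k]
        _ = (u k) ⬝ᵥ (A *ᵥ x) := dot_mulVec_symm hA _ _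
        _ = (u k) ⬝ᵥ (lam • x) := by rw [hxe]
        _ = lam * ((u k) ⬝ᵥ x) := by rw [dotProduct_smul, smul_eq_mul]
    have : (hA.eigenvalues k - lam) * ((u k) ⬝ᵥ x) = 0 := by linarith
    rcases mul_eq_zero.mp this with h | h
    · exact absurd (by linarith [sub_eq_zero.mp h]) (hne k hkne)
    · exact h
  set c : ℝ := (u k₀) ⬝ᵥ x with hc
  have hxc : ∀ i, x i = c * u k₀ i := by
    intro i
    rw [expand_vec u horth x i, Finset.sum_eq_single k₀
      (fun k _ hkne => by rw [hxorth k hkne, zero_mul]) (by simp)]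
  have hc2 : c ^ 2 = 1 := by
    have : ∑ i, (x i) ^ 2 = c ^ 2 * ∑ i, u k₀ i * u k₀ i := by
      rw [Finset.mul_sum]
      exact Finset.sum_congr rfl fun i _ => by rw [hxc i]; ring
    rw [hx, col_orth hA k₀ k₀] at this
    simpa using this.symm
  have hkerL : ∀ k l, k ≠ k₀ → (u k) ⬝ᵥ (Y *ᵥ u l) = 0 := by
    intro k l hkne
    calc (u k) ⬝ᵥ (Y *ᵥ u l) = (Y *ᵥ u k) ⬝ᵥ (u l) := (dot_mulVec_symm hY.1 (u k) (u l)).symm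
      _ = 0 := by rw [hker k (hne k hkne)]; simp
  ext i j
  rw [expand_entry u horth Y i j]
  rw [Finset.sum_eq_single k₀ (fun k _ hkne => Finset.sum_eq_zero
    (fun l _ => by rw [hkerL k l hkne, zero_mul])) (by simp)]
  rw [Finset.sum_eq_single k₀ (fun l _ hlne => by rw [hker l (hne l hlne)]; simp) (by simp)]
  have hq1 : (q k₀) * (u k₀ i * u k₀ j) = u k₀ i * u k₀ j := by rw [hq₀, one_mul]
  rw [hqdef] at hq1
  rw [hq1, Matrix.vecMulVec_apply, hxc i, hxc j]
  have hcc : c * c = 1 := by nlinarith [hc2]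
  have : c * u k₀ i * (c * u k₀ j) = (c * c) * (u k₀ i * u k₀ j) := by ring
  rw [this, hcc, one_mul]

lemma vecMulVec_psd (x : n → ℝ) : (Matrix.vecMulVec x x).PosSemidef := by
  refine Matrix.PosSemidef.of_dotProduct_mulVec_nonneg ?_ ?_
  · ext i j
    simp [Matrix.conjTranspose_apply, Matrix.vecMulVec_apply, mul_comm]
  · intro y
    have hmv : (Matrix.vecMulVec x x) *ᵥ y = fun i => x i * (x ⬝ᵥ y) := by
      funext i
      simp [Matrix.mulVec, Matrix.vecMulVec_apply, dotProduct, Finset.mul_sum, mul_assoc]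
    rw [hmv]
    have : star y ⬝ᵥ (fun i => x i * (x ⬝ᵥ y)) = (x ⬝ᵥ y) * (x ⬝ᵥ y) := by
      simp only [dotProduct, star_trivial]
      rw [Finset.sum_mul]
      refine Eq.symm (Finset.sum_congr rfl fun i _ => ?_)
      ring
    rw [this]
    exact mul_self_nonneg _

lemma sign_mul_self' {x : ℝ} (h : x ≠ 0) : Real.sign x * x = |x| := by
  rcases lt_or_gt_of_ne h with h' | h'
  · rw [Real.sign_of_neg h', abs_of_neg h']; ring
  · rw [Real.sign_of_pos h', abs_of_pos h']; ring

lemma abs_sign' {x : ℝ} (h : x ≠ 0) : |Real.sign x| = 1 := by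
  rcases lt_or_gt_of_ne h with h' | h'
  · rw [Real.sign_of_neg h']; norm_num
  · rw [Real.sign_of_pos h']; norm_num

lemma sum_restrict {d : ℕ} (J : Finset (Fin d)) (F : Fin d → ℝ) (hF : ∀ i ∉ J, F i = 0) :
    ∑ i, F i = ∑ i : ↥J, F i.1 := by
  rw [Finset.sum_coe_sort J F]
  exact (Finset.sum_subset (Finset.subset_univ J) (fun x _ hx => hF x hx)).symm

end AuxSpectral

/-- Proposition 2: the primal-dual witness construction yields the unique
optimal solution of the SDP with exact support recovery. -/
theorem sdp_witness_unique_optimal {d : ℕ}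
    (M : Matrix (Fin d) (Fin d) ℝ) (hM : M.IsSymm) (ρ : ℝ) (hρ : 0 < ρ)
    (u1 : Fin d → ℝ) (J : Finset (Fin d)) (hJ : ∀ i, i ∈ J ↔ u1 i ≠ 0)
    (hs0 : 0 < J.card) (hsd : J.card < d)
    (zh : ↥J → ℝ) (hz : ∀ i : ↥J, zh i = Real.sign (u1 i))
    (xh : ↥J → ℝ) (hunit : ∑ i, (xh i) ^ 2 = 1)
    (hlead : (subm M J J - ρ • Matrix.vecMulVec zh zh).mulVec xh
      = eigvalDesc (subm M J J - ρ • Matrix.vecMulVec zh zh) 1 • xh)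
    (wh : ↥Jᶜ → ℝ)
    (hw : wh = (ρ * ∑ i, |xh i|)⁻¹ • (subm M Jᶜ J).mulVec xh)
    (v : Fin d → ℝ)
    (hvJ : ∀ i (h : i ∈ J), v i = zh ⟨i, h⟩)
    (hvJc : ∀ i (h : i ∈ Jᶜ), v i = wh ⟨i, h⟩)
    (c1 : ∀ i : ↥J, Real.sign (xh i) = Real.sign (u1 i))
    (c2 : ∀ i, |wh i| < 1)
    (c3 : eigvalDesc (subm M J J - ρ • Matrix.vecMulVec zh zh) 1
      = eigvalDesc (M - ρ • Matrix.vecMulVec v v) 1)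
    (c4 : eigvalDesc (subm M J J - ρ • Matrix.vecMulVec zh zh) 2
      < eigvalDesc (subm M J J - ρ • Matrix.vecMulVec zh zh) 1)
    (Xh : Matrix (Fin d) (Fin d) ℝ)
    (hXh : ∀ i j, Xh i j =
      if h : i ∈ J ∧ j ∈ J then xh ⟨i, h.1⟩ * xh ⟨j, h.2⟩ else 0) :
    IsUniqueSdpOptimal ρ M Xh ∧ (∀ i, Xh i i ≠ 0 ↔ i ∈ J) := by
  classical
  haveI hJne : Nonempty ↥J := Finset.nonempty_coe_sort.mpr (Finset.card_pos.mp hs0)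
  have hMs : ∀ a b : Fin d, M a b = M b a := fun a b => by
    simpa using congrFun (congrFun hM b) a
  set B : Matrix ↥J ↥J ℝ := subm M J J - ρ • Matrix.vecMulVec zh zh with hBdef
  have hB : B.IsHermitian := by
    ext i j
    simp only [hBdef, Matrix.conjTranspose_apply, Matrix.sub_apply, Matrix.smul_apply,
      Matrix.vecMulVec_apply, smul_eq_mul, subm, star_trivial]
    rw [hMs j.1 i.1]; ring
  set lam : ℝ := eigvalDesc B 1 with hlam
  -- pointwise sign facts
  have hu1 : ∀ i : ↥J, u1 i.1 ≠ 0 := fun i => (hJ i.1).mp i.2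
  have hzsx : ∀ i : ↥J, zh i = Real.sign (xh i) := fun i => by rw [hz i, ← c1 i]
  have hxne : ∀ i : ↥J, xh i ≠ 0 := by
    intro i h0
    have h1 := c1 i
    rw [h0, Real.sign_zero] at h1
    exact (hu1 i) (Real.sign_eq_zero_iff.mp h1.symm)
  have hzx : ∀ i : ↥J, zh i * xh i = |xh i| := fun i => by
    rw [hzsx i]; exact sign_mul_self' (hxne i)
  have hz1 : ∀ i : ↥J, |zh i| = 1 := fun i => by rw [hzsx i]; exact abs_sign' (hxne i)
  set ℓ : ℝ := ∑ i : ↥J, |xh i| with hldef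
  have hlpos : 0 < ℓ := Finset.sum_pos (fun i _ => abs_pos.mpr (hxne i)) Finset.univ_nonempty
  have hzdot : ∑ i : ↥J, zh i * xh i = ℓ := Finset.sum_congr rfl (fun i _ => hzx i)
  set xt : Fin d → ℝ := fun i => if h : i ∈ J then xh ⟨i, h⟩ else 0 with hxt
  have hxtJ : ∀ (i : Fin d) (hi : i ∈ J), xt i = xh ⟨i, hi⟩ := fun i hi => dif_pos hi
  have hxtn : ∀ i ∉ J, xt i = 0 := fun i hi => dif_neg hi
  set A' : Matrix (Fin d) (Fin d) ℝ := M - ρ • Matrix.vecMulVec v v with hA'def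
  have hA'h : A'.IsHermitian := by
    ext i j
    simp only [hA'def, Matrix.conjTranspose_apply, Matrix.sub_apply, Matrix.smul_apply,
      Matrix.vecMulVec_apply, smul_eq_mul, star_trivial]
    rw [hMs j i]; ring
  have hvx : ∑ j, v j * xt j = ℓ := by
    rw [sum_restrict J _ (fun j hj => by rw [hxtn j hj, mul_zero]), ← hzdot]
    refine Finset.sum_congr rfl fun j _ => ?_
    rw [hvJ j.1 j.2, hxtJ j.1 j.2, Subtype.coe_eta j j.2]
  have hsubx : ∀ (i : Fin d) (hi : i ∈ J),
      ∑ j : ↥J, M i j.1 * xh j = lam * xh ⟨i, hi⟩ + ρ * ℓ * zh ⟨i, hi⟩ := by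
    intro i hi
    have h := congrFun hlead ⟨i, hi⟩
    have hBv : (B *ᵥ xh) ⟨i, hi⟩
        = ∑ j : ↥J, M i j.1 * xh j - ρ * (zh ⟨i, hi⟩ * ∑ j : ↥J, zh j * xh j) := by
      simp only [Matrix.mulVec, dotProduct, hBdef, Matrix.sub_apply, Matrix.smul_apply,
        Matrix.vecMulVec_apply, smul_eq_mul, subm]
      rw [Finset.mul_sum, Finset.mul_sum, ← Finset.sum_sub_distrib]
      exact Finset.sum_congr rfl fun j _ => by ring
    rw [hBv, hzdot] at h
    have h2 : (lam • xh) ⟨i, hi⟩ = lam * xh ⟨i, hi⟩ := rfl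
    rw [h2] at h
    linarith [h]
  have hwx2 : ∀ (i : Fin d) (hi : i ∈ Jᶜ),
      ∑ j : ↥J, M i j.1 * xh j = ρ * ℓ * wh ⟨i, hi⟩ := by
    intro i hi
    have h := congrFun hw ⟨i, hi⟩
    have hmv : ((subm M Jᶜ J).mulVec xh) ⟨i, hi⟩ = ∑ j : ↥J, M i j.1 * xh j := by
      simp [Matrix.mulVec, dotProduct, subm]
    have hρl : ρ * ℓ ≠ 0 := ne_of_gt (mul_pos hρ hlpos)
    rw [Pi.smul_apply, hmv, smul_eq_mul] at h
    rw [h]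
    field_simp
  have hA'x : A' *ᵥ xt = lam • xt := by
    funext i
    have expand : (A' *ᵥ xt) i = (∑ j, M i j * xt j) - ρ * (v i * ∑ j, v j * xt j) := by
      simp only [Matrix.mulVec, dotProduct, hA'def, Matrix.sub_apply, Matrix.smul_apply,
        Matrix.vecMulVec_apply, smul_eq_mul]
      rw [Finset.mul_sum, Finset.mul_sum, ← Finset.sum_sub_distrib]
      refine Finset.sum_congr rfl fun j _ => by ring
    have hSi : ∑ j, M i j * xt j = ∑ j : ↥J, M i j.1 * xh j := by
      rw [sum_restrict J _ (fun j hj => by rw [hxtn j hj, mul_zero])]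
      refine Finset.sum_congr rfl fun j _ => ?_
      rw [hxtJ j.1 j.2, Subtype.coe_eta j j.2]
    rw [expand, hSi, hvx, Pi.smul_apply, smul_eq_mul]
    by_cases hi : i ∈ J
    · rw [hsubx i hi, hvJ i hi, hxtJ i hi]
      ring
    · have hic : i ∈ Jᶜ := Finset.mem_compl.mpr hi
      rw [hwx2 i hic, hvJc i hic, hxtn i hi]
      ring
  have hA'ub : ∀ k, hA'h.eigenvalues k ≤ lam := by
    intro k
    calc hA'h.eigenvalues k ≤ eigvalDesc A' 1 := eigvalDesc_ub hA'h k
      _ = lam := c3.symm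
  have hXheq : Xh = Matrix.vecMulVec xt xt := by
    ext i j
    rw [hXh i j, Matrix.vecMulVec_apply]
    by_cases hi : i ∈ J <;> by_cases hj : j ∈ J
    · rw [dif_pos ⟨hi, hj⟩, hxtJ i hi, hxtJ j hj]
    · rw [dif_neg (by tauto), hxtn j hj, mul_zero]
    · rw [dif_neg (by tauto), hxtn i hi, zero_mul]
    · rw [dif_neg (by tauto), hxtn i hi, zero_mul]
  have hXtr : Xh.trace = 1 := by
    rw [hXheq]
    have h1 : (Matrix.vecMulVec xt xt).trace = ∑ i, xt i * xt i := by
      simp [Matrix.trace, Matrix.diag, Matrix.vecMulVec_apply]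
    rw [h1, sum_restrict J _ (fun i hi => by rw [hxtn i hi, mul_zero]), ← hunit]
    refine Finset.sum_congr rfl fun i _ => ?_
    rw [hxtJ i.1 i.2, Subtype.coe_eta i i.2]
    ring
  have hXfeas : IsSdpFeasible Xh := ⟨hXheq ▸ vecMulVec_psd xt, hXtr⟩
  have habs : ∑ i, |xt i| = ℓ := by
    rw [sum_restrict J _ (fun i hi => by rw [hxtn i hi, abs_zero]), hldef]
    refine Finset.sum_congr rfl fun i _ => ?_
    rw [hxtJ i.1 i.2, Subtype.coe_eta i i.2]
  have hobj : sdpObj ρ M Xh = lam := by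
    rw [hXheq]
    have t1 : ∑ i, ∑ j, M i j * (Matrix.vecMulVec xt xt) i j = lam + ρ * ℓ ^ 2 := by
      calc ∑ i, ∑ j, M i j * (Matrix.vecMulVec xt xt) i j
          = ∑ i, xt i * ∑ j, M i j * xt j := by
            refine Finset.sum_congr rfl fun i _ => ?_
            rw [Finset.mul_sum]
            exact Finset.sum_congr rfl fun j _ => by rw [Matrix.vecMulVec_apply]; ring
        _ = ∑ i : ↥J, (xh i * ∑ j : ↥J, M i.1 j.1 * xh j) := by
            rw [sum_restrict J _ (fun i hi => by rw [hxtn i hi, zero_mul])]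
            refine Finset.sum_congr rfl fun i _ => ?_
            rw [hxtJ i.1 i.2, Subtype.coe_eta i i.2]
            congr 1
            rw [sum_restrict J _ (fun j hj => by rw [hxtn j hj, mul_zero])]
            refine Finset.sum_congr rfl fun j _ => ?_
            rw [hxtJ j.1 j.2, Subtype.coe_eta j j.2]
        _ = ∑ i : ↥J, (lam * (xh i) ^ 2 + ρ * ℓ * (zh i * xh i)) := by
            refine Finset.sum_congr rfl fun i _ => ?_
            rw [hsubx i.1 i.2, Subtype.coe_eta i i.2]
            ring
        _ = lam + ρ * ℓ ^ 2 := by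
            rw [Finset.sum_add_distrib, ← Finset.mul_sum, hunit, mul_one]
            have : ∑ i : ↥J, ρ * ℓ * (zh i * xh i) = ρ * ℓ * ℓ := by
              rw [← Finset.mul_sum, hzdot]
            rw [this]; ring
    have t2 : ∑ i, ∑ j, |(Matrix.vecMulVec xt xt) i j| = ℓ ^ 2 := by
      calc ∑ i, ∑ j, |(Matrix.vecMulVec xt xt) i j| = ∑ i, |xt i| * ∑ j, |xt j| := by
            refine Finset.sum_congr rfl fun i _ => ?_
            rw [Finset.mul_sum]
            exact Finset.sum_congr rfl fun j _ => by rw [Matrix.vecMulVec_apply, abs_mul]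
        _ = ℓ ^ 2 := by rw [← Finset.sum_mul, habs]; ring
    rw [sdpObj, t1, t2]; ring
  have hv1 : ∀ i, i ∈ J → |v i| = 1 := fun i hi => by rw [hvJ i hi]; exact hz1 ⟨i, hi⟩
  have hvlt : ∀ i, i ∉ J → |v i| < 1 := fun i hi => by
    rw [hvJc i (Finset.mem_compl.mpr hi)]; exact c2 _
  have hvle : ∀ i, |v i| ≤ 1 := fun i => by
    by_cases hi : i ∈ J
    · exact le_of_eq (hv1 i hi)
    · exact le_of_lt (hvlt i hi)
  have hterm_le : ∀ (Y : Matrix (Fin d) (Fin d) ℝ) (i j : Fin d),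
      (v i * v j) * Y i j ≤ |Y i j| := by
    intro Y i j
    calc (v i * v j) * Y i j ≤ |(v i * v j) * Y i j| := le_abs_self _
      _ = |v i| * |v j| * |Y i j| := by rw [abs_mul, abs_mul]
      _ ≤ 1 * |Y i j| := mul_le_mul_of_nonneg_right
            (mul_le_one₀ (hvle i) (abs_nonneg _) (hvle j)) (abs_nonneg _)
      _ = |Y i j| := one_mul _
  have hA'entry : ∀ (Y : Matrix (Fin d) (Fin d) ℝ), ∑ i, ∑ j, A' i j * Y i j
      = (∑ i, ∑ j, M i j * Y i j) - ρ * ∑ i, ∑ j, (v i * v j) * Y i j := by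
    intro Y
    rw [Finset.mul_sum, ← Finset.sum_sub_distrib]
    refine Finset.sum_congr rfl fun i _ => ?_
    rw [Finset.mul_sum, ← Finset.sum_sub_distrib]
    refine Finset.sum_congr rfl fun j _ => ?_
    simp only [hA'def, Matrix.sub_apply, Matrix.smul_apply, Matrix.vecMulVec_apply, smul_eq_mul]
    ring
  have hPle : ∀ Y, IsSdpFeasible Y → ∑ i, ∑ j, A' i j * Y i j ≤ lam := by
    intro Y hY
    have := psd_inner_le hA'h hY.1 hA'ub
    rw [hY.2, mul_one] at this
    exact this
  have hub : ∀ Y, IsSdpFeasible Y → sdpObj ρ M Y ≤ lam := by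
    intro Y hY
    have habs2 : ∑ i, ∑ j, (v i * v j) * Y i j ≤ ∑ i, ∑ j, |Y i j| :=
      Finset.sum_le_sum fun i _ => Finset.sum_le_sum fun j _ => hterm_le Y i j
    have hsdp : sdpObj ρ M Y ≤ ∑ i, ∑ j, A' i j * Y i j := by
      rw [sdpObj, hA'entry Y]
      have := mul_le_mul_of_nonneg_left habs2 (le_of_lt hρ)
      linarith
    linarith [hPle Y hY]
  have hXopt : IsSdpOptimal ρ M Xh := ⟨hXfeas, fun Y hY => by rw [hobj]; exact hub Y hY⟩
  have huniq : ∀ Y, IsSdpOptimal ρ M Y → Y = Xh := by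
    intro Y hYopt
    have hYfeas := hYopt.1
    have hYval : sdpObj ρ M Y = lam :=
      le_antisymm (hub Y hYfeas) (by rw [← hobj]; exact hYopt.2 Xh hXfeas)
    set P : ℝ := ∑ i, ∑ j, A' i j * Y i j with hP
    set Q : ℝ := ∑ i, ∑ j, (|Y i j| - (v i * v j) * Y i j) with hQ
    have hQnn : ∀ i j : Fin d, 0 ≤ |Y i j| - (v i * v j) * Y i j :=
      fun i j => sub_nonneg.mpr (hterm_le Y i j)
    have hsplit : sdpObj ρ M Y = P - ρ * Q := by
      have hQeq : Q = (∑ i, ∑ j, |Y i j|) - ∑ i, ∑ j, (v i * v j) * Y i j := by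
        rw [hQ, ← Finset.sum_sub_distrib]
        exact Finset.sum_congr rfl fun i _ => by rw [← Finset.sum_sub_distrib]
      rw [sdpObj, hP, hA'entry Y, hQeq]
      ring
    have hQnn' : 0 ≤ Q := Finset.sum_nonneg fun i _ => Finset.sum_nonneg fun j _ => hQnn i j
    have hQ0 : Q = 0 := by
      have h1 : P ≤ lam := hPle Y hYfeas
      have : lam = P - ρ * Q := by rw [← hYval, hsplit]
      nlinarith
    have hPval : P = lam := by rw [hsplit] at hYval; rw [← hYval, hQ0]; ring
    have hterm0 : ∀ i j : Fin d, |Y i j| = (v i * v j) * Y i j := by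
      intro i j
      have houter := (Finset.sum_eq_zero_iff_of_nonneg
        (fun i (_ : i ∈ Finset.univ) =>
          Finset.sum_nonneg fun j _ => hQnn i j)).mp hQ0 i (Finset.mem_univ i)
      have hinner := (Finset.sum_eq_zero_iff_of_nonneg
        (fun j (_ : j ∈ Finset.univ) => hQnn i j)).mp houter j (Finset.mem_univ j)
      linarith [hinner]
    have hYoff : ∀ i j : Fin d, (i ∉ J ∨ j ∉ J) → Y i j = 0 := by
      intro i j hij
      by_contra hy0
      have habsY : 0 < |Y i j| := abs_pos.mpr hy0
      have h2 : |v i| * |v j| < 1 := by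
        rcases hij with hi | hj
        · calc |v i| * |v j| ≤ |v i| * 1 :=
                mul_le_mul_of_nonneg_left (hvle j) (abs_nonneg _)
            _ = |v i| := mul_one _
            _ < 1 := hvlt i hi
        · calc |v i| * |v j| ≤ 1 * |v j| :=
                mul_le_mul_of_nonneg_right (hvle i) (abs_nonneg _)
            _ = |v j| := one_mul _
            _ < 1 := hvlt j hj
      have hlt : |Y i j| < |Y i j| := by
        calc |Y i j| = (v i * v j) * Y i j := hterm0 i j
          _ ≤ |(v i * v j) * Y i j| := le_abs_self _
          _ = |v i| * |v j| * |Y i j| := by rw [abs_mul, abs_mul]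
          _ < 1 * |Y i j| := mul_lt_mul_of_pos_right h2 habsY
          _ = |Y i j| := one_mul _
      exact lt_irrefl _ hlt
    set YJ : Matrix ↥J ↥J ℝ := fun i j => Y i.1 j.1 with hYJ
    have hYh := hYfeas.1.1
    have hYJpsd : YJ.PosSemidef := by
      refine Matrix.PosSemidef.of_dotProduct_mulVec_nonneg ?_ ?_
      · ext i j
        simp only [hYJ, Matrix.conjTranspose_apply, star_trivial]
        exact herm_apply_symm hYh i.1 j.1
      · intro xs
        set xe : Fin d → ℝ := fun i => if h : i ∈ J then xs ⟨i, h⟩ else 0 with hxe2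
        have hxeJ : ∀ (i : Fin d) (hi : i ∈ J), xe i = xs ⟨i, hi⟩ := fun i hi => dif_pos hi
        have hxen : ∀ i ∉ J, xe i = 0 := fun i hi => dif_neg hi
        have hkey : xs ⬝ᵥ (YJ *ᵥ xs) = xe ⬝ᵥ (Y *ᵥ xe) := by
          simp only [dotProduct, Matrix.mulVec, hYJ]
          rw [sum_restrict J (fun i => xe i * ∑ j, Y i j * xe j)
            (fun i hi => by simp only [hxen i hi, zero_mul])]
          refine Eq.symm (Finset.sum_congr rfl fun i _ => ?_)
          rw [hxeJ i.1 i.2, Subtype.coe_eta i i.2]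
          congr 1
          rw [sum_restrict J (fun j => Y i.1 j * xe j)
            (fun j hj => by simp only [hxen j hj, mul_zero])]
          refine Finset.sum_congr rfl fun j _ => ?_
          rw [hxeJ j.1 j.2, Subtype.coe_eta j j.2]
        have hs : star xs = xs := funext fun i => star_trivial _
        rw [hs, hkey]
        exact psd_quad_nonneg hYfeas.1 xe
    have hYJtr : YJ.trace = 1 := by
      have h1 : Y.trace = YJ.trace := by
        simp only [Matrix.trace, Matrix.diag, hYJ]
        exact sum_restrict J (fun i => Y i i) (fun i hi => hYoff i i (Or.inl hi))
      rw [← h1, hYfeas.2]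
    have hBY : ∑ i, ∑ j, B i j * YJ i j = lam := by
      have e1 : ∑ i : ↥J, ∑ j : ↥J, B i j * YJ i j
          = ∑ i : ↥J, ∑ j : ↥J, A' i.1 j.1 * Y i.1 j.1 := by
        refine Finset.sum_congr rfl fun i _ => Finset.sum_congr rfl fun j _ => ?_
        simp only [hBdef, hA'def, subm, Matrix.sub_apply, Matrix.smul_apply,
          Matrix.vecMulVec_apply, smul_eq_mul, hYJ]
        rw [hvJ i.1 i.2, hvJ j.1 j.2, Subtype.coe_eta i i.2, Subtype.coe_eta j j.2]
      have e2 : P = ∑ i : ↥J, ∑ j : ↥J, A' i.1 j.1 * Y i.1 j.1 := by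
        rw [hP, sum_restrict J (fun i => ∑ j, A' i j * Y i j)
          (fun i hi => by
            exact Finset.sum_eq_zero fun j _ => by
              rw [hYoff i j (Or.inl hi), mul_zero])]
        refine Finset.sum_congr rfl fun i _ => ?_
        rw [sum_restrict J (fun j => A' i.1 j * Y i.1 j)
          (fun j hj => by simp only [hYoff i.1 j (Or.inr hj), mul_zero])]
      rw [e1, ← e2, hPval]
    have hYJeq : YJ = Matrix.vecMulVec xh xh :=
      psd_inner_eq hB hYJpsd (eigvalDesc_ub hB)
        (fun k l hk hl => eigvalDesc_top_unique hB c4 hk hl) hYJtr hBY hunit hlead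
    ext i j
    rw [hXh i j]
    by_cases hi : i ∈ J <;> by_cases hj : j ∈ J
    · rw [dif_pos ⟨hi, hj⟩]
      have h1 := congrFun (congrFun hYJeq ⟨i, hi⟩) ⟨j, hj⟩
      simpa [Matrix.vecMulVec_apply, hYJ] using h1
    · rw [dif_neg (by tauto)]; exact hYoff i j (Or.inr hj)
    · rw [dif_neg (by tauto)]; exact hYoff i j (Or.inl hi)
    · rw [dif_neg (by tauto)]; exact hYoff i j (Or.inl hi)
  refine ⟨⟨hXopt, huniq⟩, ?_⟩
  intro i
  rw [hXh i i]
  by_cases hi : i ∈ J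
  · rw [dif_pos ⟨hi, hi⟩]
    constructor
    · intro _; exact hi
    · intro _; exact mul_ne_zero (hxne ⟨i, hi⟩) (hxne ⟨i, hi⟩)
  · rw [dif_neg (by tauto)]
    simp [hi]
end

section
/- Let A ∈ ℝ^{s×s} be symmetric and ρ > 0. Let ẑ ∈ ℝ^s with |ẑ_i| ≤ 1 for all i, and let x̂ be a unit leading eigenvector of A − ρẑẑᵀ such that ẑ_i = sign(x̂_i) whenever x̂_i ≠ 0. If λ₁(A − ρẑẑᵀ) > λ₂(A − ρẑẑᵀ), then x̂x̂ᵀ is the unique optimal solution of the problem maximize ⟨A, X⟩ − ρ‖X‖_{1,1} over symmetric positive semidefinite X ∈ ℝ^{s×s} with tr(X) = 1. -/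
open MeasureTheory ProbabilityTheory Matrix Finset Real Filter Asymptotics

section SdpAux

open Matrix Finset

private lemma le_getD_last_of_sorted {l : List ℝ} (hl : l.Pairwise (· ≤ ·)) {a : ℝ} (ha : a ∈ l) :
    a ≤ l.getD (l.length - 1) 0 := by
  obtain ⟨i, hi, rfl⟩ := List.mem_iff_getElem.mp ha
  have hlt : l.length - 1 < l.length := by omega
  rw [List.getD_eq_getElem l 0 hlt]
  rcases Nat.lt_or_ge i (l.length - 1) with h | h
  · exact List.pairwise_iff_getElem.mp hl i (l.length - 1) hi hlt h
  · have hieq : i = l.length - 1 := by omega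
    subst hieq
    exact le_rfl

private lemma getD_sub_two_of_two_le_count {l : List ℝ} (hl : l.Pairwise (· ≤ ·)) {a : ℝ}
    (hc : 2 ≤ l.count a) (hmax : ∀ x ∈ l, x ≤ a) :
    l.getD (l.length - 2) 0 = a := by
  have hlen : 2 ≤ l.length := le_trans hc List.count_le_length
  have h2 : l.length - 2 < l.length := by omega
  rw [List.getD_eq_getElem l 0 h2]
  refine le_antisymm (hmax _ (List.getElem_mem h2)) ?_
  by_contra hcon
  push_neg at hcon
  have htake0 : (l.take (l.length - 1)).count a = 0 := by
    rw [List.count_eq_zero]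
    intro hmem
    obtain ⟨k, hk, hka⟩ := List.mem_take_iff_getElem.mp hmem
    have hk' : k < l.length - 1 := lt_of_lt_of_le hk inf_le_left
    have hle : l[k]'(by omega) ≤ l[l.length - 2]'h2 := by
      rcases Nat.lt_or_ge k (l.length - 2) with h | h
      · exact List.pairwise_iff_getElem.mp hl _ _ (by omega) h2 h
      · have hkeq : k = l.length - 2 := by omega
        subst hkeq
        exact le_rfl
    rw [hka] at hle
    exact absurd hle (not_le.mpr hcon)
  have hdrop : (l.drop (l.length - 1)).count a ≤ 1 := by
    calc (l.drop (l.length - 1)).count a ≤ (l.drop (l.length - 1)).length :=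
          List.count_le_length
      _ = 1 := by rw [List.length_drop]; omega
  have hspl : l.count a = (l.take (l.length - 1)).count a + (l.drop (l.length - 1)).count a := by
    conv_lhs => rw [← List.take_append_drop (l.length - 1) l]
    rw [List.count_append]
  omega

private lemma spectral_core {s : ℕ} (B : Matrix (Fin s) (Fin s) ℝ) (hB : B.IsHermitian)
    (xh : Fin s → ℝ) (hunit : ∑ i, (xh i) ^ 2 = 1)
    (hlead : B.mulVec xh = eigvalDesc B 1 • xh)
    (hgap : eigvalDesc B 2 < eigvalDesc B 1)
    (Y : Matrix (Fin s) (Fin s) ℝ) (hY : Y.PosSemidef) (htr : Y.trace = 1) :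
    (B * Y).trace ≤ eigvalDesc B 1 ∧
      ((B * Y).trace = eigvalDesc B 1 → Y = Matrix.vecMulVec xh xh) := by
  classical
  obtain ⟨L, hLdef⟩ : ∃ L, L = Multiset.sort (Finset.univ.val.map hB.eigenvalues) (· ≤ ·) :=
    ⟨_, rfl⟩
  have hunf : ∀ k, eigvalDesc B k = L.getD (L.length - k) 0 := by
    intro k
    rw [hLdef]
    unfold eigvalDesc
    rw [dif_pos hB]
  have hs : 0 < s := by
    rcases Nat.eq_zero_or_pos s with h | h
    · subst h; simp at hunit
    · exact h
  have hlen : L.length = s := by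
    rw [hLdef, Multiset.length_sort, Multiset.card_map]
    simp
  have hsorted : L.Pairwise (· ≤ ·) := by rw [hLdef]; exact Multiset.pairwise_sort _ _
  have hmemL : ∀ x, x ∈ L ↔ ∃ i, hB.eigenvalues i = x := by
    intro x
    rw [hLdef, Multiset.mem_sort]
    simp [List.mem_ofFn]
  have hle : ∀ i, hB.eigenvalues i ≤ eigvalDesc B 1 := by
    intro i
    rw [hunf 1]
    exact le_getD_last_of_sorted hsorted ((hmemL _).mpr ⟨i, rfl⟩)
  obtain ⟨i₀, hi₀⟩ : ∃ i, hB.eigenvalues i = eigvalDesc B 1 := by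
    rw [← hmemL, hunf 1, List.getD_eq_getElem L 0 (show L.length - 1 < L.length by omega)]
    exact List.getElem_mem _
  have huniq : ∀ j, hB.eigenvalues j = eigvalDesc B 1 → j = i₀ := by
    intro j hj
    by_contra hne
    have hcnt : 2 ≤ L.count (eigvalDesc B 1) := by
      have h1 : L.count (eigvalDesc B 1)
          = Multiset.count (eigvalDesc B 1) (Finset.univ.val.map hB.eigenvalues) := by
        rw [← Multiset.coe_count, hLdef, Multiset.sort_eq]
      rw [h1, Multiset.count_map, ← Finset.filter_val]
      exact Finset.one_lt_card.mpr
        ⟨j, Finset.mem_filter.mpr ⟨Finset.mem_univ _, hj.symm⟩,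
         i₀, Finset.mem_filter.mpr ⟨Finset.mem_univ _, hi₀.symm⟩, hne⟩
    have hmax : ∀ x ∈ L, x ≤ eigvalDesc B 1 := by
      intro x hx
      obtain ⟨i, rfl⟩ := (hmemL x).mp hx
      exact hle i
    have h2 := getD_sub_two_of_two_le_count hsorted hcnt hmax
    rw [hunf 2, h2] at hgap
    exact lt_irrefl _ hgap
  have hltev : ∀ j, j ≠ i₀ → hB.eigenvalues j < eigvalDesc B 1 :=
    fun j hj => lt_of_le_of_ne (hle j) (fun h => hj (huniq j h))
  obtain ⟨U, hU1, hU2, hdiagB⟩ : ∃ U : Matrix (Fin s) (Fin s) ℝ,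
      U * star U = 1 ∧ star U * U = 1 ∧
        B = U * Matrix.diagonal hB.eigenvalues * star U := by
    refine ⟨(hB.eigenvectorUnitary : Matrix (Fin s) (Fin s) ℝ),
      Matrix.mem_unitaryGroup_iff.mp hB.eigenvectorUnitary.2,
      Matrix.mem_unitaryGroup_iff'.mp hB.eigenvectorUnitary.2, ?_⟩
    have h := hB.spectral_theorem
    have hofR : RCLike.ofReal ∘ hB.eigenvalues = hB.eigenvalues := by
      funext i; simp
    rw [hofR] at h
    exact h
  obtain ⟨M, hMdef⟩ : ∃ M, M = star U * Y * U := ⟨_, rfl⟩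
  have hYM : Y = U * M * star U := by
    rw [hMdef]
    rw [show U * (star U * Y * U) * star U = (U * star U) * Y * (U * star U) by
      simp only [mul_assoc]]
    rw [hU1, one_mul, mul_one]
  have hMpsd : M.PosSemidef := by
    rw [hMdef, Matrix.star_eq_conjTranspose]
    exact hY.conjTranspose_mul_mul_same U
  have htrM : M.trace = 1 := by
    rw [hMdef, Matrix.trace_mul_comm (star U * Y) U, ← mul_assoc, hU1, one_mul, htr]
  have hBYeq : B * Y = U * (Matrix.diagonal hB.eigenvalues * M) * star U := by
    conv_lhs => rw [hYM, hdiagB]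
    simp only [mul_assoc]
    rw [← mul_assoc (star U) U (M * star U), hU2, one_mul]
  have htrBY : (B * Y).trace = ∑ i, hB.eigenvalues i * M i i := by
    rw [hBYeq, Matrix.trace_mul_cycle, hU2, one_mul]
    simp [Matrix.trace, Matrix.diag, Matrix.diagonal_mul]
  obtain ⟨C, hC⟩ : ∃ C : Matrix (Fin s) (Fin s) ℝ, M = Cᴴ * C := by
    open scoped MatrixOrder Matrix.Norms.L2Operator in
    obtain ⟨C, hC⟩ := CStarAlgebra.nonneg_iff_eq_star_mul_self.mp hMpsd.nonneg
    exact ⟨C, by rw [hC, Matrix.star_eq_conjTranspose]⟩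
  have hdiagM : ∀ i, M i i = ∑ k, (C k i) ^ 2 := by
    intro i
    rw [hC]
    simp [Matrix.mul_apply, Matrix.conjTranspose_apply, sq]
  have hMnn : ∀ i, 0 ≤ M i i := by
    intro i
    rw [hdiagM i]
    exact Finset.sum_nonneg fun k _ => sq_nonneg _
  have hsum1 : ∑ i, M i i = 1 := by
    simpa [Matrix.trace, Matrix.diag] using htrM
  constructor
  · rw [htrBY]
    calc ∑ i, hB.eigenvalues i * M i i ≤ ∑ i, eigvalDesc B 1 * M i i :=
          Finset.sum_le_sum fun i _ => mul_le_mul_of_nonneg_right (hle i) (hMnn i)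
      _ = eigvalDesc B 1 := by rw [← Finset.mul_sum, hsum1, mul_one]
  · intro heq
    rw [htrBY] at heq
    have hzero : ∀ i, i ≠ i₀ → M i i = 0 := by
      have hsz : ∑ i, (eigvalDesc B 1 - hB.eigenvalues i) * M i i = 0 := by
        simp only [sub_mul]
        rw [Finset.sum_sub_distrib, ← Finset.mul_sum, hsum1, mul_one, heq, sub_self]
      have h := (Finset.sum_eq_zero_iff_of_nonneg fun i _ =>
        mul_nonneg (sub_nonneg.mpr (hle i)) (hMnn i)).mp hsz
      intro i hi
      rcases mul_eq_zero.mp (h i (Finset.mem_univ i)) with h' | h'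
      · exact absurd (huniq i (by linarith)) hi
      · exact h'
    have hcolC : ∀ i, i ≠ i₀ → ∀ k, C k i = 0 := by
      intro i hi k
      have h0 : ∑ k, (C k i) ^ 2 = 0 := by rw [← hdiagM i]; exact hzero i hi
      have h1 := (Finset.sum_eq_zero_iff_of_nonneg fun k _ => sq_nonneg (C k i)).mp h0 k
        (Finset.mem_univ k)
      exact pow_eq_zero_iff two_ne_zero |>.mp h1
    have hMoff : ∀ p q, p ≠ i₀ ∨ q ≠ i₀ → M p q = 0 := by
      intro p q hpq
      rw [hC]
      simp only [Matrix.mul_apply, Matrix.conjTranspose_apply, star_trivial]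
      rcases hpq with h | h
      · exact Finset.sum_eq_zero fun k _ => by rw [hcolC p h k, zero_mul]
      · exact Finset.sum_eq_zero fun k _ => by rw [hcolC q h k, mul_zero]
    have hMii : M i₀ i₀ = 1 := by
      rw [← hsum1]
      exact (Finset.sum_eq_single_of_mem i₀ (Finset.mem_univ i₀)
        fun b _ hb => hzero b hb).symm
    obtain ⟨c, hcdef⟩ : ∃ c, c = star U *ᵥ xh := ⟨_, rfl⟩
    have hxc : U *ᵥ c = xh := by
      rw [hcdef, Matrix.mulVec_mulVec, hU1, Matrix.one_mulVec]
    have hDc : Matrix.diagonal hB.eigenvalues *ᵥ c = eigvalDesc B 1 • c := by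
      have h1 : star U * B = Matrix.diagonal hB.eigenvalues * star U := by
        conv_lhs => rw [hdiagB]
        rw [← mul_assoc, ← mul_assoc, hU2, one_mul]
      calc Matrix.diagonal hB.eigenvalues *ᵥ c
          = (Matrix.diagonal hB.eigenvalues * star U) *ᵥ xh := by
            rw [hcdef, Matrix.mulVec_mulVec]
        _ = (star U * B) *ᵥ xh := by rw [h1]
        _ = star U *ᵥ (B *ᵥ xh) := by rw [Matrix.mulVec_mulVec]
        _ = star U *ᵥ (eigvalDesc B 1 • xh) := by rw [hlead]
        _ = eigvalDesc B 1 • c := by rw [Matrix.mulVec_smul, hcdef]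
    have hcz : ∀ i, i ≠ i₀ → c i = 0 := by
      intro i hi
      have h1 : hB.eigenvalues i * c i = eigvalDesc B 1 * c i := by
        have h2 := congrFun hDc i
        rw [Matrix.mulVec_diagonal] at h2
        simpa using h2
      by_contra hc0
      exact hi (huniq i (mul_right_cancel₀ hc0 h1))
    have hcc : ∑ i, (c i) ^ 2 = 1 := by
      have h1 : c ⬝ᵥ c = xh ⬝ᵥ xh := by
        conv_lhs => rw [hcdef]
        rw [Matrix.star_eq_conjTranspose, Matrix.conjTranspose_eq_transpose_of_trivial,
          dotProduct_mulVec, Matrix.vecMul_transpose, Matrix.mulVec_mulVec,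
          ← Matrix.conjTranspose_eq_transpose_of_trivial, ← Matrix.star_eq_conjTranspose,
          hU1, Matrix.one_mulVec]
      calc ∑ i, (c i) ^ 2 = c ⬝ᵥ c := by simp [dotProduct, sq]
        _ = xh ⬝ᵥ xh := h1
        _ = 1 := by
            rw [show xh ⬝ᵥ xh = ∑ i, (xh i) ^ 2 from by simp [dotProduct, sq], hunit]
    have hc0sq : (c i₀) ^ 2 = 1 := by
      rw [← hcc]
      exact (Finset.sum_eq_single_of_mem (f := fun i => (c i) ^ 2) i₀ (Finset.mem_univ i₀)
        fun b _ hb => by show (c b) ^ 2 = 0; rw [hcz b hb]; ring).symm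
    have hxh : ∀ a, xh a = U a i₀ * c i₀ := by
      intro a
      rw [← hxc]
      rw [show (U *ᵥ c) a = ∑ p, U a p * c p from by simp [Matrix.mulVec, dotProduct]]
      exact Finset.sum_eq_single_of_mem i₀ (Finset.mem_univ _)
        fun b _ hb => by rw [hcz b hb, mul_zero]
    ext a b
    rw [Matrix.vecMulVec_apply]
    have hYab : Y a b = U a i₀ * U b i₀ := by
      have h1 : Y a b = ∑ q, (∑ p, U a p * M p q) * U b q := by
        conv_lhs => rw [hYM]
        rw [Matrix.mul_apply]
        refine Finset.sum_congr rfl fun q _ => ?_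
        rw [Matrix.mul_apply, Matrix.star_eq_conjTranspose, Matrix.conjTranspose_apply,
          star_trivial]
      rw [h1]
      rw [Finset.sum_eq_single_of_mem i₀ (Finset.mem_univ _)
        (fun q _ hq => by
          rw [Finset.sum_eq_zero fun p _ => by rw [hMoff p q (Or.inr hq), mul_zero], zero_mul])]
      rw [Finset.sum_eq_single_of_mem i₀ (Finset.mem_univ _)
        (fun p _ hp => by rw [hMoff p i₀ (Or.inl hp), mul_zero])]
      rw [hMii, mul_one]
    rw [hYab, hxh a, hxh b]
    have hr : (U a i₀ * c i₀) * (U b i₀ * c i₀) = (U a i₀ * U b i₀) * (c i₀) ^ 2 := by ring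
    rw [hr, hc0sq, mul_one]

end SdpAux

private lemma sum_mul_sum' {n : ℕ} (f g : Fin n → ℝ) :
    ∑ i, ∑ j, f i * g j = (∑ i, f i) * (∑ j, g j) := by
  rw [Finset.sum_mul]
  exact Finset.sum_congr rfl fun i _ => (Finset.mul_sum _ _ _).symm

/-- uniqueness of the SDP optimum from a leading eigenvector of the
penalized matrix. -/
theorem sdp_unique_optimal_of_leading_eigenvector {s : ℕ}
    (A : Matrix (Fin s) (Fin s) ℝ) (hA : A.IsSymm) (ρ : ℝ) (hρ : 0 < ρ)
    (zh : Fin s → ℝ) (hz : ∀ i, |zh i| ≤ 1)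
    (xh : Fin s → ℝ) (hunit : ∑ i, (xh i) ^ 2 = 1)
    (hlead : (A - ρ • Matrix.vecMulVec zh zh).mulVec xh
      = eigvalDesc (A - ρ • Matrix.vecMulVec zh zh) 1 • xh)
    (hsign : ∀ i, xh i ≠ 0 → zh i = Real.sign (xh i))
    (hgap : eigvalDesc (A - ρ • Matrix.vecMulVec zh zh) 2
      < eigvalDesc (A - ρ • Matrix.vecMulVec zh zh) 1) :
    IsUniqueSdpOptimal ρ A (Matrix.vecMulVec xh xh) := by
  classical
  obtain ⟨B, hBdef⟩ : ∃ B, B = A - ρ • Matrix.vecMulVec zh zh := ⟨_, rfl⟩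
  rw [← hBdef] at hlead hgap
  have hBh : B.IsHermitian := by
    rw [hBdef]
    show _ᴴ = _
    rw [Matrix.conjTranspose_eq_transpose_of_trivial, Matrix.transpose_sub,
      Matrix.transpose_smul, hA]
    have hvsymm : (Matrix.vecMulVec zh zh)ᵀ = Matrix.vecMulVec zh zh := by
      ext i j
      simp [Matrix.vecMulVec_apply, mul_comm]
    rw [hvsymm]
  -- feasibility of the candidate
  have hXpsd : (Matrix.vecMulVec xh xh).PosSemidef := by
    refine Matrix.posSemidef_iff_dotProduct_mulVec.mpr ⟨?_, ?_⟩
    · show _ᴴ = _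
      rw [Matrix.conjTranspose_eq_transpose_of_trivial]
      ext i j
      simp [Matrix.vecMulVec_apply, mul_comm]
    · intro y
      have h1 : star y ⬝ᵥ (Matrix.vecMulVec xh xh *ᵥ y) = (∑ i, xh i * y i) ^ 2 := by
        simp only [dotProduct, Matrix.mulVec, Matrix.vecMulVec_apply, Pi.star_apply,
          star_trivial]
        calc ∑ i, y i * ∑ j, xh i * xh j * y j
            = ∑ i, ∑ j, (xh i * y i) * (xh j * y j) := by
              refine Finset.sum_congr rfl fun i _ => ?_
              rw [Finset.mul_sum]
              refine Finset.sum_congr rfl fun j _ => ?_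
              ring
          _ = (∑ i, xh i * y i) * (∑ j, xh j * y j) := sum_mul_sum' _ _
          _ = (∑ i, xh i * y i) ^ 2 := by rw [pow_two]
      rw [h1]
      exact sq_nonneg _
  have hXtr : (Matrix.vecMulVec xh xh).trace = 1 := by
    have h1 : (Matrix.vecMulVec xh xh).trace = ∑ i, (xh i) ^ 2 := by
      simp [Matrix.trace, Matrix.diag, Matrix.vecMulVec_apply, sq]
    rw [h1, hunit]
  -- ∑ zh i * xh i = ∑ |xh i|
  have zxabs : ∑ i, zh i * xh i = ∑ i, |xh i| := by
    refine Finset.sum_congr rfl fun i _ => ?_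
    by_cases h : xh i = 0
    · rw [h]; simp
    · rw [hsign i h]
      rcases lt_or_gt_of_ne h with h' | h'
      · rw [Real.sign_of_neg h', abs_of_neg h']; ring
      · rw [Real.sign_of_pos h', abs_of_pos h']; ring
  -- quadratic form value
  have hquad : ∑ i, ∑ j, B i j * (xh i * xh j) = eigvalDesc B 1 := by
    have h1 : ∑ i, xh i * (B *ᵥ xh) i = eigvalDesc B 1 := by
      rw [hlead]
      simp only [Pi.smul_apply, smul_eq_mul]
      have h2 : ∑ i, xh i * (eigvalDesc B 1 * xh i) = eigvalDesc B 1 * ∑ i, (xh i) ^ 2 := by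
        rw [Finset.mul_sum]
        refine Finset.sum_congr rfl fun i _ => ?_
        ring
      rw [h2, hunit, mul_one]
    rw [← h1]
    refine Finset.sum_congr rfl fun i _ => ?_
    rw [show (B *ᵥ xh) i = ∑ j, B i j * xh j from by simp [Matrix.mulVec, dotProduct]]
    rw [Finset.mul_sum]
    refine Finset.sum_congr rfl fun j _ => ?_
    ring
  have hA_split : ∀ i j, A i j * (xh i * xh j)
      = B i j * (xh i * xh j) + ρ * ((zh i * xh i) * (zh j * xh j)) := by
    intro i j
    rw [hBdef]
    simp only [Matrix.sub_apply, Matrix.smul_apply, Matrix.vecMulVec_apply, smul_eq_mul]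
    ring
  have hXobj : sdpObj ρ A (Matrix.vecMulVec xh xh) = eigvalDesc B 1 := by
    simp only [sdpObj, Matrix.vecMulVec_apply]
    have e1 : ∑ i, ∑ j, A i j * (xh i * xh j)
        = eigvalDesc B 1 + ρ * ((∑ i, zh i * xh i) * (∑ j, zh j * xh j)) := by
      calc ∑ i, ∑ j, A i j * (xh i * xh j)
          = ∑ i, ∑ j, (B i j * (xh i * xh j) + ρ * ((zh i * xh i) * (zh j * xh j))) := by
            refine Finset.sum_congr rfl fun i _ => ?_
            exact Finset.sum_congr rfl fun j _ => hA_split i j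
        _ = (∑ i, ∑ j, B i j * (xh i * xh j))
            + ρ * ∑ i, ∑ j, (zh i * xh i) * (zh j * xh j) := by
            rw [Finset.mul_sum, ← Finset.sum_add_distrib]
            refine Finset.sum_congr rfl fun i _ => ?_
            rw [Finset.mul_sum, ← Finset.sum_add_distrib]
        _ = eigvalDesc B 1 + ρ * ((∑ i, zh i * xh i) * (∑ j, zh j * xh j)) := by
            rw [hquad, ← sum_mul_sum' (fun i => zh i * xh i) (fun j => zh j * xh j)]
    have e2 : ∑ i, ∑ j, |xh i * xh j| = (∑ i, |xh i|) * (∑ j, |xh j|) := by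
      rw [← sum_mul_sum' (fun i => |xh i|) (fun j => |xh j|)]
      refine Finset.sum_congr rfl fun i _ => Finset.sum_congr rfl fun j _ => ?_
      rw [abs_mul]
    rw [e1, e2, zxabs]
    ring
  -- upper bound for any feasible Y
  have hub : ∀ Y : Matrix (Fin s) (Fin s) ℝ, Y.PosSemidef → Y.trace = 1 →
      sdpObj ρ A Y ≤ (B * Y).trace := by
    intro Y hYpsd hYtr
    have hYsym : ∀ i j, Y j i = Y i j := by
      intro i j
      have h := hYpsd.1
      conv_lhs => rw [← h]
      rw [Matrix.conjTranspose_apply, star_trivial]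
    have htrBY : (B * Y).trace = ∑ i, ∑ j, B i j * Y i j := by
      simp only [Matrix.trace, Matrix.diag, Matrix.mul_apply]
      refine Finset.sum_congr rfl fun i _ => ?_
      refine Finset.sum_congr rfl fun j _ => ?_
      rw [hYsym i j]
    simp only [sdpObj]
    rw [htrBY]
    have hBsplit : ∑ i, ∑ j, B i j * Y i j
        = (∑ i, ∑ j, A i j * Y i j) - ρ * ∑ i, ∑ j, (zh i * zh j) * Y i j := by
      rw [Finset.mul_sum, ← Finset.sum_sub_distrib]
      refine Finset.sum_congr rfl fun i _ => ?_
      rw [Finset.mul_sum, ← Finset.sum_sub_distrib]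
      refine Finset.sum_congr rfl fun j _ => ?_
      rw [hBdef]
      simp only [Matrix.sub_apply, Matrix.smul_apply, Matrix.vecMulVec_apply, smul_eq_mul]
      ring
    rw [hBsplit]
    have hzz : ∑ i, ∑ j, (zh i * zh j) * Y i j ≤ ∑ i, ∑ j, |Y i j| := by
      refine Finset.sum_le_sum fun i _ => Finset.sum_le_sum fun j _ => ?_
      calc (zh i * zh j) * Y i j ≤ |(zh i * zh j) * Y i j| := le_abs_self _
        _ = |zh i| * |zh j| * |Y i j| := by rw [abs_mul, abs_mul]
        _ ≤ 1 * 1 * |Y i j| := by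
            refine mul_le_mul_of_nonneg_right ?_ (abs_nonneg _)
            exact mul_le_mul (hz i) (hz j) (abs_nonneg _) zero_le_one
        _ = |Y i j| := by ring
    have := mul_le_mul_of_nonneg_left hzz hρ.le
    linarith
  refine ⟨⟨⟨hXpsd, hXtr⟩, ?_⟩, ?_⟩
  · intro Y hYf
    calc sdpObj ρ A Y ≤ (B * Y).trace := hub Y hYf.1 hYf.2
      _ ≤ eigvalDesc B 1 := (spectral_core B hBh xh hunit hlead hgap Y hYf.1 hYf.2).1
      _ = sdpObj ρ A (Matrix.vecMulVec xh xh) := hXobj.symm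
  · intro Y hYopt
    have hYf := hYopt.1
    have h1 : eigvalDesc B 1 ≤ sdpObj ρ A Y := by
      rw [← hXobj]
      exact hYopt.2 _ ⟨hXpsd, hXtr⟩
    have h2 := hub Y hYf.1 hYf.2
    have h3 := spectral_core B hBh xh hunit hlead hgap Y hYf.1 hYf.2
    exact h3.2 (le_antisymm h3.1 (le_trans h1 h2))
end

section
/- Under the incomplete noisy observation model, fix ρ > 0 and c > 0 and define ẑ ∈ ℝ^s by ẑ_i = sign(u_{1,i}) for i ∈ J. If ρ > 2·√(p·s^c·((1−p)·‖M*_{J^c,J}‖_F² + (d−s)·s·σ²)) + p·‖M*_{J^c,J}‖_max, then with probability at least 1 − s^{−c}, ‖M_{J^c,J}‖_max < ρ, and consequently for every unit leading eigenvector x̂ of M_{J,J} − ρẑẑᵀ, the vector ŵ = (1/(ρ‖x̂‖₁))·M_{J^c,J}·x̂ satisfies ‖ŵ‖_∞ < 1. -/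
open MeasureTheory ProbabilityTheory Matrix Finset Real Filter Asymptotics

noncomputable section

/-- The incomplete and noisy observation model for sparse PCA. -/
structure ObsModel (d : ℕ) (Ω : Type*) [MeasurableSpace Ω] where
  hd : 2 ≤ d
  μ : Measure Ω
  probμ : IsProbabilityMeasure μ
  /-- the unknown true symmetric matrix -/
  Mstar : Matrix (Fin d) (Fin d) ℝ
  hsym : Mstar.IsSymm
  /-- its eigenvalues, in decreasing order -/
  lam : Fin d → ℝ
  /-- corresponding orthonormal eigenvectors -/
  u : Fin d → Fin d → ℝ
  heig : ∀ k, Mstar.mulVec (u k) = lam k • u k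
  horth : ∀ k l, (∑ i, u k i * u l i) = if k = l then (1 : ℝ) else 0
  hmono : ∀ k l : Fin d, k ≤ l → lam l ≤ lam k
  hgap : lam ⟨1, by omega⟩ < lam ⟨0, by omega⟩
  /-- support of the leading eigenvector -/
  J : Finset (Fin d)
  hJ : ∀ i, i ∈ J ↔ u ⟨0, by omega⟩ i ≠ 0
  hslb : 0 < J.card
  hsub : J.card < d
  /-- observation probability -/
  p : ℝ
  hp0 : 0 < p
  hp1 : p ≤ 1
  /-- noise variance -/
  σ2 : ℝ
  hσ2 : 0 ≤ σ2
  /-- a.s. noise bound -/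
  B : ℝ
  hB : 0 ≤ B
  /-- Bernoulli sampling indicators -/
  δ : Fin d → Fin d → Ω → ℝ
  /-- noise variables -/
  ε : Fin d → Fin d → Ω → ℝ
  hδsymm : ∀ i j, δ i j = δ j i
  hεsymm : ∀ i j, ε i j = ε j i
  hδmeas : ∀ i j, Measurable (δ i j)
  hεmeas : ∀ i j, Measurable (ε i j)
  hδ01 : ∀ i j ω, δ i j ω = 0 ∨ δ i j ω = 1
  hδp : ∀ i j, μ {ω | δ i j ω = 1} = ENNReal.ofReal p
  hεmean : ∀ i j, (∫ ω, ε i j ω ∂μ) = 0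
  hεvar : ∀ i j, (∫ ω, (ε i j ω) ^ 2 ∂μ) = σ2
  hεbdd : ∀ i j, ∀ᵐ ω ∂μ, |ε i j ω| ≤ B
  /-- all `δ i j` and `ε i j` for `i ≤ j` are mutually independent -/
  indep : iIndepFun
      (fun q : {q : Fin d × Fin d // q.1 ≤ q.2} ⊕ {q : Fin d × Fin d // q.1 ≤ q.2} =>
        Sum.elim (fun q' => δ q'.1.1 q'.1.2) (fun q' => ε q'.1.1 q'.1.2) q) μ

namespace ObsModel

variable {d : ℕ} {W : Type*} [MeasurableSpace W]

/-- size of the support -/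
def s (m : ObsModel d W) : ℕ := m.J.card

/-- the sparse leading eigenvector -/
def u1 (m : ObsModel d W) : Fin d → ℝ := m.u ⟨0, by have := m.hd; omega⟩

/-- largest eigenvalue of `M*` -/
def lam1 (m : ObsModel d W) : ℝ := m.lam ⟨0, by have := m.hd; omega⟩

/-- the observed random matrix `M` -/
def Mobs (m : ObsModel d W) (ω : W) : Matrix (Fin d) (Fin d) ℝ :=
  fun i j => m.δ i j ω * (m.Mstar i j + m.ε i j ω)

def JJ (m : ObsModel d W) : Matrix m.J m.J ℝ := subm m.Mstar m.J m.J
def JcJ (m : ObsModel d W) : Matrix ↥m.Jᶜ ↥m.J ℝ := subm m.Mstar m.Jᶜ m.J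
def JJc (m : ObsModel d W) : Matrix ↥m.J ↥m.Jᶜ ℝ := subm m.Mstar m.J m.Jᶜ
def JcJc (m : ObsModel d W) : Matrix ↥m.Jᶜ ↥m.Jᶜ ℝ := subm m.Mstar m.Jᶜ m.Jᶜ

/-- spectral gap `λ₁(M*_{J,J}) − λ₂(M*_{J,J})` -/
def gapJJ (m : ObsModel d W) : ℝ := eigvalDesc m.JJ 1 - eigvalDesc m.JJ 2

/-- `min_{i ∈ J} |u₁ᵢ|` -/
def minu (m : ObsModel d W) : ℝ :=
  m.J.inf' (Finset.card_pos.mp m.hslb) (fun i => |m.u1 i|)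

def R1 (m : ObsModel d W) : ℝ :=
  max ((1 - m.p) * maxNorm m.JJ + m.B) (m.p * maxNorm m.JJ)
def R2 (m : ObsModel d W) : ℝ :=
  Real.sqrt (m.p * (1 - m.p)) * norm2Inf m.JJ + Real.sqrt (m.p * m.s * m.σ2)
def R3 (m : ObsModel d W) : ℝ :=
  max ((1 - m.p) * maxNorm m.JcJ + m.B) (m.p * maxNorm m.JcJ)
def R4 (m : ObsModel d W) : ℝ :=
  max (Real.sqrt (m.p * (1 - m.p)) * norm2Inf m.JcJ + Real.sqrt (m.p * ((d : ℝ) - m.s) * m.σ2))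
    (Real.sqrt (m.p * (1 - m.p)) * norm2Inf m.JJc + Real.sqrt (m.p * m.s * m.σ2))
def R5 (m : ObsModel d W) : ℝ :=
  max ((1 - m.p) * maxNorm m.JcJc + m.B) (m.p * maxNorm m.JcJc)
def R6 (m : ObsModel d W) : ℝ :=
  Real.sqrt (m.p * (1 - m.p)) * norm2Inf m.JcJc + Real.sqrt (m.p * ((d : ℝ) - m.s) * m.σ2)

def K1 (m : ObsModel d W) (c : ℝ) : ℝ :=
  (c + 1) * m.R1 * Real.log (2 * (m.s : ℝ))
    + Real.sqrt (2 * (c + 1)) * m.R2 * Real.sqrt (Real.log (2 * (m.s : ℝ)))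
def K2 (m : ObsModel d W) (c : ℝ) : ℝ :=
  (c + 1) * m.R3 * Real.log (d : ℝ)
    + Real.sqrt (2 * (c + 1)) * m.R4 * Real.sqrt (Real.log (d : ℝ))
def K3 (m : ObsModel d W) (c : ℝ) : ℝ :=
  (c + 1) * m.R5 * Real.log (2 * ((d : ℝ) - m.s))
    + Real.sqrt (2 * (c + 1)) * m.R6 * Real.sqrt (Real.log (2 * ((d : ℝ) - m.s)))

/-- the sign vector of `u₁` on `J` -/
def zhat (m : ObsModel d W) : ↥m.J → ℝ := fun i => Real.sign (m.u1 i.1)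

/-- coherence parameters -/
def mu0 (m : ObsModel d W) : ℝ := maxNorm m.JJ / m.gapJJ
def mu1 (m : ObsModel d W) : ℝ := maxNorm m.JJ / norm2Inf m.JJ
def mu2 (m : ObsModel d W) : ℝ :=
  min (min (maxNorm m.JcJ / frobNorm m.JcJ)
      (max (maxNorm m.JcJ / norm2Inf m.JcJ) (maxNorm m.JcJ / norm2Inf m.JcJᵀ)))
    (maxNorm m.JcJ / normInf2 m.JcJᵀ)
def mu3 (m : ObsModel d W) : ℝ :=
  min (maxNorm m.JcJc / specNorm m.JcJc) (maxNorm m.JcJc / norm2Inf m.JcJc)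

/-- the event that the SDP has a unique optimal solution whose diagonal support is exactly `J` -/
def ExactRecovery (m : ObsModel d W) (ρ : ℝ) (ω : W) : Prop :=
  ∃ X : Matrix (Fin d) (Fin d) ℝ, IsUniqueSdpOptimal ρ (m.Mobs ω) X ∧
    ∀ i, X i i ≠ 0 ↔ i ∈ m.J

end ObsModel

end

section AuxLemmas

open MeasureTheory ProbabilityTheory

variable {d : ℕ} {W : Type*} [MeasurableSpace W]

private lemma aux_integrable {μ : Measure W} [IsFiniteMeasure μ] {f : W → ℝ}
    (hm : Measurable f) {C : ℝ} (h : ∀ᵐ ω ∂μ, |f ω| ≤ C) : Integrable f μ :=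
  (integrable_const C).mono' hm.aestronglyMeasurable (h.mono fun ω hω => by simpa using hω)

private lemma aux_indep (m : ObsModel d W) (i j : Fin d) :
    IndepFun (m.δ i j) (m.ε i j) m.μ := by
  rcases le_total i j with hij | hij
  · have := m.indep.indepFun
      (i := Sum.inl ⟨(i, j), hij⟩) (j := Sum.inr ⟨(i, j), hij⟩) (by simp)
    simpa using this
  · have := m.indep.indepFun
      (i := Sum.inl ⟨(j, i), hij⟩) (j := Sum.inr ⟨(j, i), hij⟩) (by simp)
    rw [m.hδsymm i j, m.hεsymm i j]
    simpa using this

private lemma aux_int_delta (m : ObsModel d W) (i j : Fin d) :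
    ∫ ω, m.δ i j ω ∂m.μ = m.p := by
  haveI := m.probμ
  have hs : MeasurableSet {ω | m.δ i j ω = 1} := m.hδmeas i j (measurableSet_singleton 1)
  have hfun : m.δ i j = Set.indicator {ω | m.δ i j ω = 1} (fun _ => (1 : ℝ)) := by
    funext ω
    rcases m.hδ01 i j ω with h0 | h1
    · rw [Set.indicator_of_notMem (by simp [Set.mem_setOf_eq, h0]), h0]
    · rw [Set.indicator_of_mem (by simpa [Set.mem_setOf_eq] using h1), h1]
  rw [hfun, integral_indicator_const _ hs, measureReal_def, m.hδp i j, smul_eq_mul, mul_one,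
    ENNReal.toReal_ofReal m.hp0.le]

private lemma aux_moment (m : ObsModel d W) (i j : Fin d) :
    Integrable (fun ω => (m.δ i j ω * (m.Mstar i j + m.ε i j ω) - m.p * m.Mstar i j) ^ 2) m.μ ∧
    ∫ ω, (m.δ i j ω * (m.Mstar i j + m.ε i j ω) - m.p * m.Mstar i j) ^ 2 ∂m.μ
      = m.p * (1 - m.p) * (m.Mstar i j) ^ 2 + m.p * m.σ2 := by
  haveI := m.probμ
  set a := m.Mstar i j with ha
  have hDm := m.hδmeas i j
  have hEm := m.hεmeas i j
  have hD01 := m.hδ01 i j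
  have hDb : ∀ ω, |m.δ i j ω| ≤ 1 := by
    intro ω; rcases hD01 ω with h | h <;> rw [h] <;> norm_num
  have hEb := m.hεbdd i j
  have intD : Integrable (m.δ i j) m.μ := aux_integrable hDm (Filter.Eventually.of_forall hDb)
  have intE : Integrable (m.ε i j) m.μ := aux_integrable hEm hEb
  have intE2 : Integrable (fun ω => (m.ε i j ω) ^ 2) m.μ := by
    refine aux_integrable (hEm.pow_const 2) (C := m.B ^ 2) (hEb.mono fun ω hω => ?_)
    rw [abs_pow]
    exact pow_le_pow_left₀ (abs_nonneg _) hω 2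
  have intDE : Integrable (fun ω => m.δ i j ω * m.ε i j ω) m.μ := by
    refine aux_integrable (hDm.mul hEm) (C := m.B) (hEb.mono fun ω hω => ?_)
    rw [abs_mul]
    calc |m.δ i j ω| * |m.ε i j ω| ≤ 1 * m.B :=
          mul_le_mul (hDb ω) hω (abs_nonneg _) zero_le_one
      _ = m.B := one_mul _
  have intDE2 : Integrable (fun ω => m.δ i j ω * (m.ε i j ω) ^ 2) m.μ := by
    refine aux_integrable (hDm.mul (hEm.pow_const 2)) (C := m.B ^ 2)
      (hEb.mono fun ω hω => ?_)
    rw [abs_mul, abs_pow]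
    calc |m.δ i j ω| * |m.ε i j ω| ^ 2 ≤ 1 * m.B ^ 2 :=
          mul_le_mul (hDb ω) (pow_le_pow_left₀ (abs_nonneg _) hω 2) (by positivity) zero_le_one
      _ = m.B ^ 2 := one_mul _
  have key : (fun ω => (m.δ i j ω * (a + m.ε i j ω) - m.p * a) ^ 2)
      = fun ω => (a ^ 2 - 2 * m.p * a ^ 2) * m.δ i j ω
          + ((2 * a - 2 * m.p * a) * (m.δ i j ω * m.ε i j ω)
            + (m.δ i j ω * (m.ε i j ω) ^ 2 + m.p ^ 2 * a ^ 2)) := by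
    funext ω
    rcases hD01 ω with h | h <;> rw [h] <;> ring
  have hIndDE : ∫ ω, m.δ i j ω * m.ε i j ω ∂m.μ = 0 := by
    have h := (aux_indep m i j).integral_fun_mul_eq_mul_integral intD.1 intE.1
    rw [m.hεmean i j, mul_zero] at h
    exact h
  have hIndDE2 : ∫ ω, m.δ i j ω * (m.ε i j ω) ^ 2 ∂m.μ = m.p * m.σ2 := by
    have hind2 : IndepFun (m.δ i j) (fun ω => (m.ε i j ω) ^ 2) m.μ := by
      have := (aux_indep m i j).comp measurable_id (measurable_id.pow_const 2)
      simpa [Function.comp_def] using this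
    have h := hind2.integral_fun_mul_eq_mul_integral intD.1 intE2.1
    rw [m.hεvar i j, aux_int_delta m i j] at h
    exact h
  have IB2 : Integrable (fun ω => m.δ i j ω * (m.ε i j ω) ^ 2 + m.p ^ 2 * a ^ 2) m.μ :=
    intDE2.add (integrable_const _)
  have IB1 : Integrable (fun ω => (2 * a - 2 * m.p * a) * (m.δ i j ω * m.ε i j ω)
      + (m.δ i j ω * (m.ε i j ω) ^ 2 + m.p ^ 2 * a ^ 2)) m.μ :=
    (intDE.const_mul _).add IB2
  have IA : Integrable (fun ω => (a ^ 2 - 2 * m.p * a ^ 2) * m.δ i j ω) m.μ :=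
    intD.const_mul _
  have intbig : Integrable (fun ω => (m.δ i j ω * (a + m.ε i j ω) - m.p * a) ^ 2) m.μ := by
    rw [key]
    exact IA.add IB1
  refine ⟨intbig, ?_⟩
  rw [key, integral_add IA IB1, integral_add (intDE.const_mul _) IB2,
    integral_add intDE2 (integrable_const _),
    integral_const_mul, integral_const_mul, aux_int_delta m i j, hIndDE, hIndDE2,
    integral_const]
  simp only [measureReal_def, measure_univ, ENNReal.toReal_one, smul_eq_mul, one_mul, mul_zero]
  ring

end AuxLemmas

/-- Lemma 3: sufficient condition for strict dual feasibility of `ŵ`. -/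
theorem dual_strict_feasibility {d : ℕ} {W : Type*} [MeasurableSpace W]
    (m : ObsModel d W) (ρ c : ℝ) (hρ : 0 < ρ) (hc : 0 < c)
    (h : ρ > 2 * Real.sqrt (m.p * (m.s : ℝ) ^ c *
        ((1 - m.p) * frobNorm m.JcJ ^ 2 + ((d : ℝ) - m.s) * m.s * m.σ2))
      + m.p * maxNorm m.JcJ) :
    ENNReal.ofReal (1 - (m.s : ℝ) ^ (-c))
      ≤ m.μ {ω | maxNorm (subm (m.Mobs ω) m.Jᶜ m.J) < ρ ∧
          ∀ xh : ↥m.J → ℝ, (∑ i, (xh i) ^ 2 = 1) →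
            (subm (m.Mobs ω) m.J m.J - ρ • Matrix.vecMulVec m.zhat m.zhat).mulVec xh
              = eigvalDesc (subm (m.Mobs ω) m.J m.J
                  - ρ • Matrix.vecMulVec m.zhat m.zhat) 1 • xh →
            ∀ i : ↥m.Jᶜ,
              |((ρ * ∑ k, |xh k|)⁻¹ • (subm (m.Mobs ω) m.Jᶜ m.J).mulVec xh) i| < 1} := by
  haveI := m.probμ
  set MN : ℝ := maxNorm m.JcJ with hMN
  set t : ℝ := ρ - m.p * MN with hts
  set V0 : ℝ := m.p * ((1 - m.p) * frobNorm m.JcJ ^ 2 + ((d : ℝ) - m.s) * m.s * m.σ2) with hV0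
  have hs1 : (1 : ℝ) ≤ (m.s : ℝ) := by exact_mod_cast m.hslb
  have hsc : (0 : ℝ) < (m.s : ℝ) ^ c := Real.rpow_pos_of_pos (by linarith) c
  have hds : (0 : ℝ) ≤ (d : ℝ) - (m.s : ℝ) := by
    have : (m.s : ℝ) ≤ (d : ℝ) := by exact_mod_cast m.hsub.le
    linarith
  have hV0nn : 0 ≤ V0 := by
    refine mul_nonneg m.hp0.le (add_nonneg (mul_nonneg (by linarith [m.hp1]) (sq_nonneg _))
      (mul_nonneg (mul_nonneg hds (Nat.cast_nonneg _)) m.hσ2))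
  have ht : 2 * Real.sqrt ((m.s : ℝ) ^ c * V0) < t := by
    have hrw : m.p * (m.s : ℝ) ^ c * ((1 - m.p) * frobNorm m.JcJ ^ 2
        + ((d : ℝ) - m.s) * m.s * m.σ2) = (m.s : ℝ) ^ c * V0 := by rw [hV0]; ring
    rw [← hrw, hts]
    linarith [h]
  have ht0 : 0 < t := lt_of_le_of_lt (by positivity) ht
  have ht2 : (m.s : ℝ) ^ c * V0 * 4 < t ^ 2 := by
    have h1 : (2 * Real.sqrt ((m.s : ℝ) ^ c * V0)) ^ 2 = 4 * ((m.s : ℝ) ^ c * V0) := by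
      rw [mul_pow, Real.sq_sqrt (mul_nonneg hsc.le hV0nn)]; ring
    nlinarith [Real.sqrt_nonneg ((m.s : ℝ) ^ c * V0), ht, h1]
  -- the sum of squared deviations
  set f : W → ℝ := fun ω => ∑ i ∈ m.Jᶜ, ∑ j ∈ m.J,
    (m.δ i j ω * (m.Mstar i j + m.ε i j ω) - m.p * m.Mstar i j) ^ 2 with hf
  have hfmeas : Measurable f := by
    refine Finset.measurable_sum _ fun i _ => Finset.measurable_sum _ fun j _ => ?_
    exact (((m.hδmeas i j).mul (measurable_const.add (m.hεmeas i j))).sub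
      measurable_const).pow_const 2
  have hfnn : ∀ ω, 0 ≤ f ω :=
    fun ω => Finset.sum_nonneg fun i _ => Finset.sum_nonneg fun j _ => sq_nonneg _
  have hfint : Integrable f m.μ :=
    integrable_finset_sum _ fun i _ => integrable_finset_sum _ fun j _ => (aux_moment m i j).1
  have hF2 : frobNorm m.JcJ ^ 2 = ∑ i ∈ m.Jᶜ, ∑ j ∈ m.J, (m.Mstar i j) ^ 2 := by
    have h1 : frobNorm m.JcJ ^ 2 = ∑ i : ↥m.Jᶜ, ∑ j : ↥m.J, (m.Mstar i.1 j.1) ^ 2 := by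
      rw [frobNorm, Real.sq_sqrt (show (0:ℝ) ≤ ∑ i, ∑ j, (m.JcJ i j) ^ 2 by positivity)]
      rfl
    calc frobNorm m.JcJ ^ 2 = ∑ i : ↥m.Jᶜ, ∑ j : ↥m.J, (m.Mstar i.1 j.1) ^ 2 := h1
      _ = ∑ i : ↥m.Jᶜ, ∑ j ∈ m.J, (m.Mstar i.1 j) ^ 2 :=
          Finset.sum_congr rfl fun i _ =>
            Finset.sum_coe_sort m.J (fun j => (m.Mstar i.1 j) ^ 2)
      _ = ∑ i ∈ m.Jᶜ, ∑ j ∈ m.J, (m.Mstar i j) ^ 2 :=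
          Finset.sum_coe_sort m.Jᶜ (fun i => ∑ j ∈ m.J, (m.Mstar i j) ^ 2)
  have hcard : ((m.Jᶜ.card : ℝ)) = (d : ℝ) - (m.s : ℝ) := by
    rw [Finset.card_compl, Fintype.card_fin]
    rw [Nat.cast_sub m.hsub.le]
    rfl
  have hfval : ∫ ω, f ω ∂m.μ = V0 := by
    have h1 : ∫ ω, f ω ∂m.μ = ∑ i ∈ m.Jᶜ, ∑ j ∈ m.J,
        (m.p * (1 - m.p) * (m.Mstar i j) ^ 2 + m.p * m.σ2) := by
      rw [hf, integral_finset_sum _ (fun i _ => integrable_finset_sum _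
        (fun j _ => (aux_moment m i j).1))]
      exact Finset.sum_congr rfl fun i _ => by
        rw [integral_finset_sum _ (fun j _ => (aux_moment m i j).1)]
        exact Finset.sum_congr rfl fun j _ => (aux_moment m i j).2
    rw [h1]
    simp only [Finset.sum_add_distrib, Finset.sum_const, nsmul_eq_mul, ← Finset.mul_sum]
    rw [hV0, ← hF2, hcard, show ((m.J.card : ℝ)) = ((m.s : ℝ)) from rfl]
    ring
  -- Markov
  set Sbad : Set W := {ω | t ^ 2 ≤ f ω} with hSbad
  have hSbadMeas : MeasurableSet Sbad := measurableSet_le measurable_const hfmeas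
  have hmark := mul_meas_ge_le_integral_of_nonneg
    (Filter.Eventually.of_forall hfnn) hfint (t ^ 2)
  rw [hfval, measureReal_def] at hmark
  have hbad : m.μ Sbad ≤ ENNReal.ofReal ((m.s : ℝ) ^ (-c)) := by
    have h2 : (m.μ Sbad).toReal ≤ V0 / t ^ 2 := by
      rw [le_div_iff₀ (by positivity)]
      linarith [hmark]
    have h3 : V0 / t ^ 2 ≤ (m.s : ℝ) ^ (-c) := by
      rw [Real.rpow_neg (by linarith), div_le_iff₀ (by positivity : (0:ℝ) < t ^ 2),
        inv_mul_eq_div, le_div_iff₀ hsc]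
      nlinarith [ht2, hV0nn, hsc]
    rw [← ENNReal.ofReal_toReal (measure_ne_top m.μ Sbad)]
    exact ENNReal.ofReal_le_ofReal (h2.trans h3)
  -- the good event contains Sbadᶜ
  haveI hJne : Nonempty ↥m.J := Finset.nonempty_coe_sort.mpr (Finset.card_pos.mp m.hslb)
  haveI hJcne : Nonempty ↥m.Jᶜ := by
    refine Finset.nonempty_coe_sort.mpr (Finset.card_pos.mp ?_)
    rw [Finset.card_compl, Fintype.card_fin]
    have := m.hsub
    omega
  have hsubset : Sbadᶜ ⊆ {ω | maxNorm (subm (m.Mobs ω) m.Jᶜ m.J) < ρ ∧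
      ∀ xh : ↥m.J → ℝ, (∑ i, (xh i) ^ 2 = 1) →
        (subm (m.Mobs ω) m.J m.J - ρ • Matrix.vecMulVec m.zhat m.zhat).mulVec xh
          = eigvalDesc (subm (m.Mobs ω) m.J m.J
              - ρ • Matrix.vecMulVec m.zhat m.zhat) 1 • xh →
        ∀ i : ↥m.Jᶜ,
          |((ρ * ∑ k, |xh k|)⁻¹ • (subm (m.Mobs ω) m.Jᶜ m.J).mulVec xh) i| < 1} := by
    intro ω hω
    simp only [Set.mem_compl_iff, Set.mem_setOf_eq, not_le, hSbad] at hω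
    have hflt : f ω < t ^ 2 := hω
    have hMstar_bd : ∀ (i : ↥m.Jᶜ) (j : ↥m.J), |m.Mstar i.1 j.1| ≤ MN := by
      intro i j
      rw [hMN]
      unfold maxNorm
      exact le_trans (le_ciSup (Set.Finite.bddAbove (Set.finite_range
          (fun j' : ↥m.J => |m.JcJ i j'|))) j)
        (le_ciSup (Set.Finite.bddAbove (Set.finite_range
          (fun i' : ↥m.Jᶜ => ⨆ j' : ↥m.J, |m.JcJ i' j'|))) i)
    have hr : Real.sqrt (f ω) < t := (Real.sqrt_lt' ht0).mpr hflt
    have hentry : ∀ (i : ↥m.Jᶜ) (j : ↥m.J),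
        |m.Mobs ω i.1 j.1| ≤ Real.sqrt (f ω) + m.p * MN := by
      intro i j
      have hterm : (m.δ i.1 j.1 ω * (m.Mstar i.1 j.1 + m.ε i.1 j.1 ω)
          - m.p * m.Mstar i.1 j.1) ^ 2 ≤ f ω := by
        rw [hf]
        calc (m.δ i.1 j.1 ω * (m.Mstar i.1 j.1 + m.ε i.1 j.1 ω)
              - m.p * m.Mstar i.1 j.1) ^ 2
            ≤ ∑ j' ∈ m.J, (m.δ i.1 j' ω * (m.Mstar i.1 j' + m.ε i.1 j' ω)
              - m.p * m.Mstar i.1 j') ^ 2 :=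
              Finset.single_le_sum (f := fun j' => (m.δ i.1 j' ω * (m.Mstar i.1 j'
                + m.ε i.1 j' ω) - m.p * m.Mstar i.1 j') ^ 2)
                (fun j' _ => sq_nonneg _) j.2
          _ ≤ _ := Finset.single_le_sum (f := fun i' => ∑ j' ∈ m.J,
              (m.δ i' j' ω * (m.Mstar i' j' + m.ε i' j' ω) - m.p * m.Mstar i' j') ^ 2)
              (fun i' _ => Finset.sum_nonneg fun j' _ => sq_nonneg _) i.2
      have h1 : |m.δ i.1 j.1 ω * (m.Mstar i.1 j.1 + m.ε i.1 j.1 ω)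
          - m.p * m.Mstar i.1 j.1| ≤ Real.sqrt (f ω) := Real.abs_le_sqrt hterm
      have h2 : |m.p * m.Mstar i.1 j.1| ≤ m.p * MN := by
        rw [abs_mul, abs_of_nonneg m.hp0.le]
        exact mul_le_mul_of_nonneg_left (hMstar_bd i j) m.hp0.le
      show |m.δ i.1 j.1 ω * (m.Mstar i.1 j.1 + m.ε i.1 j.1 ω)| ≤ _
      calc |m.δ i.1 j.1 ω * (m.Mstar i.1 j.1 + m.ε i.1 j.1 ω)|
          = |(m.δ i.1 j.1 ω * (m.Mstar i.1 j.1 + m.ε i.1 j.1 ω)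
              - m.p * m.Mstar i.1 j.1) + m.p * m.Mstar i.1 j.1| := by ring_nf
        _ ≤ |m.δ i.1 j.1 ω * (m.Mstar i.1 j.1 + m.ε i.1 j.1 ω)
              - m.p * m.Mstar i.1 j.1| + |m.p * m.Mstar i.1 j.1| := abs_add_le _ _
        _ ≤ Real.sqrt (f ω) + m.p * MN := add_le_add h1 h2
    have hmaxlt : maxNorm (subm (m.Mobs ω) m.Jᶜ m.J) < ρ := by
      have hle : maxNorm (subm (m.Mobs ω) m.Jᶜ m.J) ≤ Real.sqrt (f ω) + m.p * MN := by
        unfold maxNorm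
        exact ciSup_le fun i => ciSup_le fun j => hentry i j
      have : Real.sqrt (f ω) + m.p * MN < ρ := by
        rw [hts] at hr; linarith
      exact lt_of_le_of_lt hle this
    refine ⟨hmaxlt, ?_⟩
    intro xh hxh _ i
    set L : ℝ := ∑ k, |xh k| with hL
    have hLnn : 0 ≤ L := Finset.sum_nonneg fun k _ => abs_nonneg _
    have hL0 : 0 < L := by
      rcases eq_or_lt_of_le hLnn with hE | hgt
      · exfalso
        have hz : ∀ k : ↥m.J, xh k = 0 := by
          intro k
          have := (Finset.sum_eq_zero_iff_of_nonneg
            (fun k (_ : k ∈ Finset.univ) => abs_nonneg (xh k))).mp hE.symm k (Finset.mem_univ k)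
          exact abs_eq_zero.mp this
        rw [Finset.sum_eq_zero (fun k _ => by rw [hz k]; ring)] at hxh
        norm_num at hxh
      · exact hgt
    set A : Matrix ↥m.Jᶜ ↥m.J ℝ := subm (m.Mobs ω) m.Jᶜ m.J with hA
    set MA : ℝ := maxNorm A with hMA
    have hAbd : ∀ j : ↥m.J, |A i j| ≤ MA := by
      intro j
      rw [hMA]
      unfold maxNorm
      exact le_trans (le_ciSup (Set.Finite.bddAbove (Set.finite_range
          (fun j' : ↥m.J => |A i j'|))) j)
        (le_ciSup (Set.Finite.bddAbove (Set.finite_range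
          (fun i' : ↥m.Jᶜ => ⨆ j' : ↥m.J, |A i' j'|))) i)
    have hmv : |A.mulVec xh i| ≤ MA * L := by
      show |∑ j, A i j * xh j| ≤ MA * L
      calc |∑ j, A i j * xh j| ≤ ∑ j, |A i j * xh j| := Finset.abs_sum_le_sum_abs _ _
        _ ≤ ∑ j, MA * |xh j| := Finset.sum_le_sum fun j _ => by
              rw [abs_mul]
              exact mul_le_mul_of_nonneg_right (hAbd j) (abs_nonneg _)
        _ = MA * L := by rw [← Finset.mul_sum]
    have h5 : |((ρ * L)⁻¹ • A.mulVec xh) i| = (ρ * L)⁻¹ * |A.mulVec xh i| := by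
      rw [Pi.smul_apply, smul_eq_mul, abs_mul, abs_of_nonneg (by positivity)]
    rw [h5]
    calc (ρ * L)⁻¹ * |A.mulVec xh i| ≤ (ρ * L)⁻¹ * (MA * L) :=
          mul_le_mul_of_nonneg_left hmv (by positivity)
      _ = MA / ρ := by field_simp
      _ < 1 := (div_lt_one hρ).mpr hmaxlt
  -- conclude
  calc ENNReal.ofReal (1 - (m.s : ℝ) ^ (-c))
      = 1 - ENNReal.ofReal ((m.s : ℝ) ^ (-c)) := by
        rw [ENNReal.ofReal_sub _ (Real.rpow_nonneg (by linarith) _), ENNReal.ofReal_one]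
    _ ≤ 1 - m.μ Sbad := tsub_le_tsub_left hbad 1
    _ ≤ m.μ Sbadᶜ := by
        rw [measure_compl hSbadMeas (measure_ne_top _ _), measure_univ]
    _ ≤ _ := measure_mono hsubset
end

section
/- Let M ∈ ℝ^{d×d} be symmetric and ρ > 0. Suppose X̂, Ẑ ∈ ℝ^{d×d} and μ̂ ∈ ℝ satisfy: X̂ is symmetric positive semidefinite with tr(X̂) = 1; M − ρẐ ⪯ μ̂·I; for each pair (i,j), Ẑ_{ij} = sign(X̂_{ij}) if X̂_{ij} ≠ 0 and Ẑ_{ij} ∈ [−1,1] if X̂_{ij} = 0; and (M − ρẐ)·X̂ = μ̂·X̂. Then X̂ is an optimal solution of the problem maximize ⟨M, X⟩ − ρ‖X‖_{1,1} over symmetric positive semidefinite X ∈ ℝ^{d×d} with tr(X) = 1. -/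
open MeasureTheory ProbabilityTheory Matrix Finset Real Filter Asymptotics

theorem psd_trace_mul_nonneg {n : ℕ} (P Y : Matrix (Fin n) (Fin n) ℝ)
    (hP : P.PosSemidef) (hY : Y.PosSemidef) : 0 ≤ (P * Y).trace := by
  obtain ⟨B, rfl⟩ : ∃ B : Matrix (Fin n) (Fin n) ℝ, P = Bᴴ * B := by
    open scoped MatrixOrder in exact CStarAlgebra.nonneg_iff_eq_star_mul_self.mp hP.nonneg
  obtain ⟨C, rfl⟩ : ∃ C : Matrix (Fin n) (Fin n) ℝ, Y = Cᴴ * C := by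
    open scoped MatrixOrder in exact CStarAlgebra.nonneg_iff_eq_star_mul_self.mp hY.nonneg
  have key : (Bᴴ * B * (Cᴴ * C)).trace = ((B * Cᴴ)ᴴ * (B * Cᴴ)).trace := by
    rw [show Bᴴ * B * (Cᴴ * C) = Bᴴ * (B * Cᴴ * C) by noncomm_ring,
      Matrix.trace_mul_comm Bᴴ (B * Cᴴ * C),
      Matrix.conjTranspose_mul, Matrix.conjTranspose_conjTranspose,
      Matrix.trace_mul_comm (C * Bᴴ) (B * Cᴴ)]
    congr 1
    noncomm_ring
  rw [key, Matrix.trace]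
  apply Finset.sum_nonneg
  intro i _
  simp only [Matrix.diag_apply, Matrix.mul_apply, Matrix.conjTranspose_apply, star_trivial]
  exact Finset.sum_nonneg fun j _ => mul_self_nonneg _


theorem inner_eq_trace {d : ℕ} (A W : Matrix (Fin d) (Fin d) ℝ) (hW : W.IsHermitian) :
    ∑ i, ∑ j, A i j * W i j = (A * W).trace := by
  rw [Matrix.trace]
  apply Finset.sum_congr rfl
  intro i _
  rw [Matrix.diag_apply, Matrix.mul_apply]
  apply Finset.sum_congr rfl
  intro j _
  rw [show W j i = W i j from by
    have := congrFun (congrFun hW i) j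
    simpa [Matrix.conjTranspose_apply] using this]


/-- KKT sufficiency for optimality of the full SDP. -/
theorem sdp_kkt_sufficient_optimality {d : ℕ}
    (M : Matrix (Fin d) (Fin d) ℝ) (hM : M.IsSymm) (ρ : ℝ) (hρ : 0 < ρ)
    (Xh Zh : Matrix (Fin d) (Fin d) ℝ) (μh : ℝ)
    (hX : Xh.PosSemidef) (htr : Xh.trace = 1)
    (hpsd : (μh • (1 : Matrix (Fin d) (Fin d) ℝ) - (M - ρ • Zh)).PosSemidef)
    (hZ : ∀ i j, (Xh i j ≠ 0 → Zh i j = Real.sign (Xh i j)) ∧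
      (Xh i j = 0 → Zh i j ∈ Set.Icc (-1 : ℝ) 1))
    (heq : (M - ρ • Zh) * Xh = μh • Xh) :
    IsSdpOptimal ρ M Xh := by
  set A := M - ρ • Zh with hA
  -- value at Xh is μh
  have htrAX : (A * Xh).trace = μh := by
    rw [heq, Matrix.trace_smul, htr, smul_eq_mul, mul_one]
  have hZX : ∀ i j, Zh i j * Xh i j = |Xh i j| := by
    intro i j
    by_cases h : Xh i j = 0
    · simp [h]
    · rw [(hZ i j).1 h]
      rcases lt_or_gt_of_ne h with h' | h'
      · rw [Real.sign_of_neg h', abs_of_neg h']; ring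
      · rw [Real.sign_of_pos h', abs_of_pos h']; ring
  have hobjX : sdpObj ρ M Xh = μh := by
    rw [← htrAX, ← inner_eq_trace A Xh hX.1, sdpObj]
    simp only [hA, Matrix.sub_apply, Matrix.smul_apply, smul_eq_mul, sub_mul, mul_assoc,
      Finset.sum_sub_distrib, Finset.mul_sum, hZX]
  refine ⟨⟨hX, htr⟩, ?_⟩
  rintro Y ⟨hYpsd, hYtr⟩
  rw [hobjX]
  -- bound on Σ Z Y
  have hZY : ∀ i j, Zh i j * Y i j ≤ |Y i j| := by
    intro i j
    have hz : |Zh i j| ≤ 1 := by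
      by_cases h : Xh i j = 0
      · exact abs_le.mpr ((hZ i j).2 h)
      · rw [(hZ i j).1 h]
        rcases lt_or_gt_of_ne h with h' | h'
        · rw [Real.sign_of_neg h']; norm_num
        · rw [Real.sign_of_pos h']; norm_num
    calc Zh i j * Y i j ≤ |Zh i j * Y i j| := le_abs_self _
      _ = |Zh i j| * |Y i j| := abs_mul _ _
      _ ≤ |Y i j| := by nlinarith [abs_nonneg (Y i j)]
  -- trace bound
  have htrAY : (A * Y).trace ≤ μh := by
    have h0 : 0 ≤ ((μh • (1 : Matrix (Fin d) (Fin d) ℝ) - A) * Y).trace :=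
      psd_trace_mul_nonneg _ _ hpsd hYpsd
    rw [Matrix.sub_mul, Matrix.trace_sub, Matrix.smul_mul, Matrix.one_mul,
      Matrix.trace_smul, hYtr, smul_eq_mul, mul_one] at h0
    linarith
  calc sdpObj ρ M Y = (∑ i, ∑ j, M i j * Y i j) - ρ * ∑ i, ∑ j, |Y i j| := rfl
    _ ≤ (∑ i, ∑ j, M i j * Y i j) - ρ * ∑ i, ∑ j, Zh i j * Y i j := by
        apply sub_le_sub_left
        apply mul_le_mul_of_nonneg_left _ hρ.le
        apply Finset.sum_le_sum; intro i _
        exact Finset.sum_le_sum fun j _ => hZY i j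
    _ = ∑ i, ∑ j, A i j * Y i j := by
        simp only [hA, Matrix.sub_apply, Matrix.smul_apply, smul_eq_mul, sub_mul, mul_assoc,
          Finset.sum_sub_distrib, Finset.mul_sum]
    _ = (A * Y).trace := inner_eq_trace A Y hYpsd.1
    _ ≤ μh := htrAY
end
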